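/- arXiv:1310.8371 — 4 statements merged into one kernel-verified Lean document; each statement's English description precedes it below -/
import Mathlib

section
/- Let a, b, c, h ∈ ℂ with 0 ≤ Re(a) < 1 and b ≠ 1, and let V be a highest weight module over the Neveu–Schwarz algebra with highest weight vector u of highest weight (c, h). Then every linear endomorphism of V ⊗ SA'_{a,b} that commutes with all the operators L_m (m ∈ ℤ) and G_r (r ∈ Z) is a scalar multiple of the identity; that is, End(V ⊗ SA'_{a,b}) ≅ ℂ, and in particular V ⊗ SA'_{a,b} is indecomposable. -/
noncomputable section

open Submodule

/-- The underlying data of a `ℤ/2`-graded complex vector space equipped with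
operators `L m` (`m ∈ ℤ`) and `G k` (`k ∈ ℤ`, where `G k` represents the
operator `G_{k+1/2}` indexed by the half-integer `k + 1/2`). -/
structure PreNSMod where
  carrier : Type
  [acg : AddCommGroup carrier]
  [mod : Module ℂ carrier]
  even : Submodule ℂ carrier
  odd : Submodule ℂ carrier
  compl : IsCompl even odd
  L : ℤ → carrier →ₗ[ℂ] carrier
  G : ℤ → carrier →ₗ[ℂ] carrier

attribute [instance] PreNSMod.acg PreNSMod.mod

/-- A Neveu–Schwarz module of central charge `c`. -/
structure NSMod (c : ℂ) extends PreNSMod where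
  mapsL_even : ∀ (m : ℤ), ∀ v ∈ even, L m v ∈ even
  mapsL_odd : ∀ (m : ℤ), ∀ v ∈ odd, L m v ∈ odd
  mapsG_even : ∀ (k : ℤ), ∀ v ∈ even, G k v ∈ odd
  mapsG_odd : ∀ (k : ℤ), ∀ v ∈ odd, G k v ∈ even
  rel_LL : ∀ (m n : ℤ) (v : carrier),
    L m (L n v) - L n (L m v)
      = ((n : ℂ) - (m : ℂ)) • L (m + n) v
        + (if m + n = 0 then (((m : ℂ) ^ 3 - (m : ℂ)) / 12) * c else 0) • v
  rel_LG : ∀ (m k : ℤ) (v : carrier),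
    L m (G k v) - G k (L m v) = (((k : ℂ) + 1 / 2) - (m : ℂ) / 2) • G (m + k) v
  rel_GG : ∀ (k l : ℤ) (v : carrier),
    G k (G l v) + G l (G k v)
      = (2 : ℂ) • L (k + l + 1) v
        - (if k + l + 1 = 0 then (1 / 3) * (((k : ℂ) + 1 / 2) ^ 2 - 1 / 4) * c else 0) • v

/-- A submodule (invariant subspace) of a Neveu–Schwarz module. -/
def NSMod.IsSubmodule {c : ℂ} (S : NSMod c) (W : Submodule ℂ S.carrier) : Prop :=
  (∀ (m : ℤ), ∀ v ∈ W, S.L m v ∈ W) ∧ (∀ (k : ℤ), ∀ v ∈ W, S.G k v ∈ W)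

/-- Simplicity (irreducibility) of a Neveu–Schwarz module. -/
def NSMod.IsSimple {c : ℂ} (S : NSMod c) : Prop :=
  (∃ v : S.carrier, v ≠ 0) ∧
    ∀ W : Submodule ℂ S.carrier, S.IsSubmodule W → W = ⊥ ∨ W = ⊤

/-- `W` is a nonzero submodule which is simple as a module (it has no invariant
subspaces other than `⊥` and itself). -/
def NSMod.IsSimpleSubmodule {c : ℂ} (S : NSMod c) (W : Submodule ℂ S.carrier) : Prop :=
  S.IsSubmodule W ∧ W ≠ ⊥ ∧
    ∀ W' : Submodule ℂ S.carrier, S.IsSubmodule W' → W' ≤ W → W' = ⊥ ∨ W' = W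

/-- A homomorphism of Neveu–Schwarz modules: a linear map commuting with all
the operators `L m` and `G k`. -/
structure NSHom {c c' : ℂ} (S : NSMod c) (T : NSMod c') where
  toFun : S.carrier →ₗ[ℂ] T.carrier
  commL : ∀ (m : ℤ) (v : S.carrier), toFun (S.L m v) = T.L m (toFun v)
  commG : ∀ (k : ℤ) (v : S.carrier), toFun (S.G k v) = T.G k (toFun v)

/-- Two Neveu–Schwarz modules are isomorphic if there is a bijective
homomorphism between them. -/
def NSIso {c c' : ℂ} (S : NSMod c) (T : NSMod c') : Prop :=
  ∃ f : NSHom S T, Function.Bijective f.toFun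

/-- A realization of the intermediate series module `SA_{a,b}` inside a
Neveu–Schwarz module `S` of central charge `0`: a basis `x j` (`j ∈ ℤ`, even)
and `y j` (`j ∈ ℤ`, representing `y_{j+1/2}`, odd) on which the operators act
by the defining formulas of `SA_{a,b}`. -/
structure SAFamily (a b : ℂ) (S : NSMod 0) where
  x : ℤ → S.carrier
  y : ℤ → S.carrier
  x_even : ∀ j : ℤ, x j ∈ S.even
  y_odd : ∀ j : ℤ, y j ∈ S.odd
  indep : LinearIndependent ℂ (Sum.elim x y)
  spans : Submodule.span ℂ (Set.range x ∪ Set.range y) = ⊤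
  act_Lx : ∀ i j : ℤ, S.L i (x j) = (a + (j : ℂ) + (i : ℂ) * b) • x (i + j)
  act_Ly : ∀ i j : ℤ,
    S.L i (y j) = (a + 1 / 2 + (j : ℂ) + (i : ℂ) * (b - 1 / 2)) • y (i + j)
  act_Gx : ∀ i j : ℤ, S.G i (x j) = y (i + j)
  act_Gy : ∀ i j : ℤ,
    S.G i (y j) = (a + 1 / 2 + (j : ℂ) + (2 * (i : ℂ) + 1) * (b - 1 / 2)) • x (i + j + 1)

/-- A realization of the intermediate series module `SA'_{a,b}` (for
`0 ≤ Re a < 1`, `b ≠ 1`) inside a Neveu–Schwarz module `S` of central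
charge `0`.  For `(a,b) ≠ (1/2,1/2)` this is `SA_{a,b}` itself; for
`(a,b) = (1/2,1/2)` it is the quotient `SA_{1/2,1/2}/ℂ·y_{-1/2}`, in which
the image of `y_{-1/2}` (here `y (-1)`) is zero and the remaining vectors
form a basis.  The action formulas hold verbatim in both cases. -/
structure SA'Family (a b : ℂ) (S : NSMod 0) where
  x : ℤ → S.carrier
  y : ℤ → S.carrier
  x_even : ∀ j : ℤ, x j ∈ S.even
  y_odd : ∀ j : ℤ, y j ∈ S.odd
  spans : Submodule.span ℂ (Set.range x ∪ Set.range y) = ⊤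
  indep_special : a = 1 / 2 ∧ b = 1 / 2 →
    y (-1) = 0 ∧
      LinearIndependent ℂ (Sum.elim x (fun j : {j : ℤ // j ≠ -1} => y j.1))
  indep_generic : ¬(a = 1 / 2 ∧ b = 1 / 2) → LinearIndependent ℂ (Sum.elim x y)
  act_Lx : ∀ i j : ℤ, S.L i (x j) = (a + (j : ℂ) + (i : ℂ) * b) • x (i + j)
  act_Ly : ∀ i j : ℤ,
    S.L i (y j) = (a + 1 / 2 + (j : ℂ) + (i : ℂ) * (b - 1 / 2)) • y (i + j)
  act_Gx : ∀ i j : ℤ, S.G i (x j) = y (i + j)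
  act_Gy : ∀ i j : ℤ,
    S.G i (y j) = (a + 1 / 2 + (j : ℂ) + (2 * (i : ℂ) + 1) * (b - 1 / 2)) • x (i + j + 1)

/-- `u` is a highest weight vector of weight `(c,h)` generating the
Neveu–Schwarz module `S` (of central charge `c`). -/
structure IsHW {c : ℂ} (h : ℂ) (S : NSMod c) (u : S.carrier) : Prop where
  ne_zero : u ≠ 0
  mem_even : u ∈ S.even
  hw0 : S.L 0 u = h • u
  hwL : ∀ n : ℤ, 1 ≤ n → S.L n u = 0
  hwG : ∀ k : ℤ, 0 ≤ k → S.G k u = 0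
  gen : ∀ W : Submodule ℂ S.carrier, S.IsSubmodule W → u ∈ W → W = ⊤

/-- A realization of the tensor product Neveu–Schwarz module `V ⊗ S` (with
`V` of central charge `c` and `S` of central charge `0`) as a Neveu–Schwarz
module `T` of central charge `c`, via the bilinear map `t`. -/
structure TensorWitness {c : ℂ} (V : NSMod c) (S : NSMod 0) (T : NSMod c) where
  t : V.carrier →ₗ[ℂ] S.carrier →ₗ[ℂ] T.carrier
  isTensor : IsTensorProduct t
  grade_ee : ∀ v ∈ V.even, ∀ w ∈ S.even, t v w ∈ T.even
  grade_oo : ∀ v ∈ V.odd, ∀ w ∈ S.odd, t v w ∈ T.even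
  grade_eo : ∀ v ∈ V.even, ∀ w ∈ S.odd, t v w ∈ T.odd
  grade_oe : ∀ v ∈ V.odd, ∀ w ∈ S.even, t v w ∈ T.odd
  actL : ∀ (m : ℤ) (v : V.carrier) (w : S.carrier),
    T.L m (t v w) = t (V.L m v) w + t v (S.L m w)
  actG_even : ∀ (k : ℤ), ∀ v ∈ V.even, ∀ w : S.carrier,
    T.G k (t v w) = t (V.G k v) w + t v (S.G k w)
  actG_odd : ∀ (k : ℤ), ∀ v ∈ V.odd, ∀ w : S.carrier,
    T.G k (t v w) = t (V.G k v) w - t v (S.G k w)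

/-- The PBW monomial `L_{-n₁} ⋯ L_{-n_p} G_{-r₁} ⋯ G_{-r_q} u`, where the
second list records each half-integer `r = k - 1/2` by the integer `k`
(so that `G_{-r}` is the operator `G (-k)`). -/
def vermaMonomial {c : ℂ} (M : NSMod c) (u : M.carrier) (p : List ℤ × List ℤ) :
    M.carrier :=
  (p.1.map fun n => M.L (-n)).foldr (fun f v => f v)
    ((p.2.map fun k => M.G (-k)).foldr (fun f v => f v) u)

/-- The index set for the PBW basis of a Verma module: weakly decreasing lists
of positive integers `n₁ ≥ ⋯ ≥ n_p ≥ 1`, together with strictly decreasing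
lists of positive half-integers `r₁ > ⋯ > r_q > 0` (with `r = k - 1/2`
recorded by the integer `k ≥ 1`). -/
def VermaIndex : Type :=
  {p : List ℤ × List ℤ //
    p.1.Chain' (· ≥ ·) ∧ (∀ n ∈ p.1, 1 ≤ n) ∧
      p.2.Chain' (· > ·) ∧ (∀ k ∈ p.2, 1 ≤ k)}

/-- `M` is the Verma module of highest weight `(c,h)` with highest weight
vector `u`: the PBW monomials in the negative-mode operators applied to `u`
form a basis of `M`. -/
def IsVerma {c : ℂ} (h : ℂ) (M : NSMod c) (u : M.carrier) : Prop :=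
  IsHW h M u ∧
    LinearIndependent ℂ (fun p : VermaIndex => vermaMonomial M u p.1) ∧
    Submodule.span ℂ (Set.range fun p : VermaIndex => vermaMonomial M u p.1) = ⊤

/-- The grading assumption on a highest weight module `V` of highest weight
`(c,h)`: `V = ⨁_{n ∈ ℕ} V_{h-n/2}` where `D n = V_{h-n/2}` is the
`L₀`-eigenspace with eigenvalue `h - n/2`, contained in the even part for
`n` even and the odd part for `n` odd, and `u ∈ D 0`. -/
structure GradedHW {c : ℂ} (h : ℂ) (V : NSMod c) (u : V.carrier)
    (D : ℕ → Submodule ℂ V.carrier) : Prop where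
  hw : IsHW h V u
  u_mem : u ∈ D 0
  internal : DirectSum.IsInternal D
  eig : ∀ (n : ℕ), ∀ v ∈ D n, V.L 0 v = (h - (n : ℂ) / 2) • v
  even_part : ∀ n : ℕ, Even n → D n ≤ V.even
  odd_part : ∀ n : ℕ, Odd n → D n ≤ V.odd

/-- A realization of the shifted module `V ⊗ ℂ[t^{±1/2}]` on the graded
vector space `Sh`.  Here `ι p v` represents `v ⊗ t^{p/2}` (half-integers
`s ∈ (1/2)ℤ` are recorded by integers `p` with `s = p/2`), and `D n` is the
weight space `V_{h - n/2}` (so `d = -n/2`).  The case distinction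
`s + d ∈ ℤ` versus `s + d ∈ ℤ + 1/2` becomes `2 ∣ (p - n)` versus its
negation. -/
structure ShiftedWitness (a b : ℂ) {c : ℂ} (V : NSMod c)
    (D : ℕ → Submodule ℂ V.carrier) (Sh : PreNSMod) where
  ι : ℤ → V.carrier →ₗ[ℂ] Sh.carrier
  directSum : Function.Bijective
    (Finsupp.lsum ℂ ι : (ℤ →₀ V.carrier) →ₗ[ℂ] Sh.carrier)
  grade_even : ∀ p : ℤ, (2 : ℤ) ∣ p → ∀ v : V.carrier, ι p v ∈ Sh.even
  grade_odd : ∀ p : ℤ, ¬(2 : ℤ) ∣ p → ∀ v : V.carrier, ι p v ∈ Sh.odd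
  actL : ∀ (k p : ℤ) (n : ℕ), ∀ v ∈ D n,
    Sh.L k (ι p v) = ι (p + 2 * k) (V.L k v)
      + (if (2 : ℤ) ∣ (p - (n : ℤ))
          then a + (p : ℂ) / 2 + (k : ℂ) * b + (n : ℂ) / 2
          else a + (p : ℂ) / 2 + (k : ℂ) * (b - 1 / 2) + (n : ℂ) / 2) •
            ι (p + 2 * k) v
  actG : ∀ (k p : ℤ) (n : ℕ), ∀ v ∈ D n,
    Sh.G k (ι p v) = ι (p + 2 * k + 1) (V.G k v)
      + ((-1 : ℂ) ^ n *
          (if (2 : ℤ) ∣ (p - (n : ℤ)) then 1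
            else a + (p : ℂ) / 2 + (2 * (k : ℂ) + 1) * (b - 1 / 2) + (n : ℂ) / 2)) •
            ι (p + 2 * k + 1) v

/-- A realization of the *reduced* shifted module: the quotient of the
shifted module `V ⊗ ℂ[t^{±1/2}]` by the copy of `V` spanned by the vectors
`v ⊗ t^{d - 1/2}` (`v ∈ V_{h+d}`) when `(a,b) = (1/2,1/2)`, and the shifted
module itself otherwise. -/
structure RedShiftedWitness (a b : ℂ) {c : ℂ} (V : NSMod c)
    (D : ℕ → Submodule ℂ V.carrier) (R : NSMod c) where
  ι : ℤ → V.carrier →ₗ[ℂ] R.carrier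
  surj : Function.Surjective
    (Finsupp.lsum ℂ ι : (ℤ →₀ V.carrier) →ₗ[ℂ] R.carrier)
  ker_special : a = 1 / 2 ∧ b = 1 / 2 →
    LinearMap.ker (Finsupp.lsum ℂ ι : (ℤ →₀ V.carrier) →ₗ[ℂ] R.carrier)
      = Submodule.span ℂ
          {w : ℤ →₀ V.carrier | ∃ n : ℕ, ∃ v ∈ D n, w = Finsupp.single (-(n : ℤ) - 1) v}
  ker_generic : ¬(a = 1 / 2 ∧ b = 1 / 2) →
    LinearMap.ker (Finsupp.lsum ℂ ι : (ℤ →₀ V.carrier) →ₗ[ℂ] R.carrier) = ⊥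
  grade_even : ∀ p : ℤ, (2 : ℤ) ∣ p → ∀ v : V.carrier, ι p v ∈ R.even
  grade_odd : ∀ p : ℤ, ¬(2 : ℤ) ∣ p → ∀ v : V.carrier, ι p v ∈ R.odd
  actL : ∀ (k p : ℤ) (n : ℕ), ∀ v ∈ D n,
    R.L k (ι p v) = ι (p + 2 * k) (V.L k v)
      + (if (2 : ℤ) ∣ (p - (n : ℤ))
          then a + (p : ℂ) / 2 + (k : ℂ) * b + (n : ℂ) / 2
          else a + (p : ℂ) / 2 + (k : ℂ) * (b - 1 / 2) + (n : ℂ) / 2) •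
            ι (p + 2 * k) v
  actG : ∀ (k p : ℤ) (n : ℕ), ∀ v ∈ D n,
    R.G k (ι p v) = ι (p + 2 * k + 1) (V.G k v)
      + ((-1 : ℂ) ^ n *
          (if (2 : ℤ) ∣ (p - (n : ℤ)) then 1
            else a + (p : ℂ) / 2 + (2 * (k : ℂ) + 1) * (b - 1 / 2) + (n : ℂ) / 2)) •
            ι (p + 2 * k + 1) v

/-- `φ` is a shifted character at level `s = p/2` on the Verma module `M`
with grading `D` and highest weight vector `u`:  `φ u = 1` and `φ` satisfies
the defining recursions on homogeneous vectors (`w ∈ D n` means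
`L₀ w = (h + d) w` with `d = -n/2` and `w` of parity `n mod 2`; the operator
`G (-j)` is `G_{-r}` with `r = j - 1/2 > 0`). -/
def IsShiftedChar (a b : ℂ) {c : ℂ} (M : NSMod c)
    (D : ℕ → Submodule ℂ M.carrier) (u : M.carrier) (p : ℤ)
    (φ : M.carrier →ₗ[ℂ] ℂ) : Prop :=
  φ u = 1 ∧
    (∀ (n : ℕ), ∀ w ∈ D n, ∀ k : ℤ, 1 ≤ k →
      φ (M.L (-k) w)
        = (if (2 : ℤ) ∣ (p - (n : ℤ))
            then -(a + (p : ℂ) / 2 + (k : ℂ) - (k : ℂ) * b + (n : ℂ) / 2)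
            else -(a + (p : ℂ) / 2 + (k : ℂ) - (k : ℂ) * (b - 1 / 2) + (n : ℂ) / 2))
          * φ w) ∧
    (∀ (n : ℕ), ∀ w ∈ D n, ∀ j : ℤ, 1 ≤ j →
      φ (M.G (-j) w)
        = (if (2 : ℤ) ∣ (p - (n : ℤ))
            then -(-1 : ℂ) ^ n *
              (a + (p : ℂ) / 2 + ((j : ℂ) - 1 / 2)
                - 2 * ((j : ℂ) - 1 / 2) * (b - 1 / 2) + (n : ℂ) / 2)
            else -(-1 : ℂ) ^ n)
          * φ w)

/-!
Write `e_i` for the basis `x_j`, `y_{j+1/2}` of `SA'_{a,b}` and let `φ` commute with the action.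
Expand `φ (u ⊗ e_m) = ∑_j w_{m,j} ⊗ e_j` with `w_{m,j} ∈ V`. Comparing `L₀`-eigenvalues puts
`w_{m,j}` in the weight space `V_{h+m-j}`, so it vanishes for `j < m`, and `w_{m,m} ∈ V_h = ℂ u`.
Since `L_k u = 0` for `k > 0`, applying `L_k` gives `w_{m+k,j}` in terms of `L_k w_{m,j}` and
`w_{m,j-k}` with coefficients affine in the indices; in the `y`-coordinates this recursion forces
all entries above the diagonal to vanish, `0 ≤ Re a < 1` and `b ≠ 1` excluding the degenerate
coefficients. Applying `G_r` (`r > 0`), which also kills `u`, transfers this to the `x`-coordinates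
and identifies all diagonal entries with one `z u`. Hence `φ - z` vanishes on `u ⊗ SA'`, and so on
all of `V ⊗ SA'` because `u` generates `V`. Indecomposability follows by applying this to the
projections of a decomposition.
-/

open Filter

lemma Module.End.eigenspace_le_iSup {K M ι : Type*} [Field K] [AddCommGroup M] [Module K M]
    (f : Module.End K M) {μ : ι → K} {C : ι → Submodule K M}
    (hC : ∀ i, C i ≤ f.eigenspace (μ i)) (htop : ⨆ i, C i = ⊤) (ν : K) :
    f.eigenspace ν ≤ ⨆ (i) (_ : μ i = ν), C i := by
  set A := ⨆ (i) (_ : μ i = ν), C i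
  set B := ⨆ (i) (_ : μ i ≠ ν), C i
  have hA : A ≤ f.eigenspace ν := iSup₂_le fun i hi => hi ▸ hC i
  have hB : Disjoint B (f.eigenspace ν) :=
    ((iSupIndep_def.mp f.eigenspaces_iSupIndep ν).mono_right
      (iSup₂_mono' fun i hi => ⟨μ i, hi, hC i⟩)).symm
  have hAB : A ⊔ B = ⊤ := by
    refine top_le_iff.mp (htop ▸ iSup_le fun i => ?_)
    by_cases hi : μ i = ν
    · exact le_sup_of_le_left (le_iSup₂_of_le i hi le_rfl)
    · exact le_sup_of_le_right (le_iSup₂_of_le i hi le_rfl)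
  calc f.eigenspace ν = (A ⊔ B) ⊓ f.eigenspace ν := by rw [hAB, top_inf_eq]
    _ = A ⊔ B ⊓ f.eigenspace ν := sup_inf_assoc_of_le _ hA
    _ ≤ A := by rw [hB.eq_bot, sup_bot_eq]

open Polynomial in
lemma finite_setOf_cubic_sub_cubic_eq_zero {R : Type*} [CommRing R] [IsDomain R]
    {p₁ p₂ p₃ q₁ q₂ q₃ : R} (h : p₁ + p₂ + p₃ ≠ q₁ + q₂ + q₃) :
    {x : R | (x + p₁) * (x + p₂) * (x + p₃) - (x + q₁) * (x + q₂) * (x + q₃) = 0}.Finite := by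
  have hP : C (p₁ + p₂ + p₃ - (q₁ + q₂ + q₃)) * X ^ 2
      + C (p₁ * p₂ + p₁ * p₃ + p₂ * p₃ - (q₁ * q₂ + q₁ * q₃ + q₂ * q₃)) * X
      + C (p₁ * p₂ * p₃ - q₁ * q₂ * q₃) ≠ 0 := by
    rw [← leadingCoeff_ne_zero, leadingCoeff_quadratic (sub_ne_zero.mpr h)]
    exact sub_ne_zero.mpr h
  refine (finite_setOfPred_isRoot hP).subset fun x (hx : _ = _) => ?_
  simp only [Set.mem_ofPred_eq, IsRoot, eval_add, eval_mul, eval_C, eval_pow, eval_X]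
  linear_combination hx

lemma Set.Finite.eventually_notMem_atTop {α : Type*} [Preorder α] [NoTopOrder α] {s : Set α}
    (hs : s.Finite) : ∀ᶠ m in atTop, m ∉ s :=
  hs.eventually_cofinite_notMem.filter_mono atTop_le_cofinite

lemma eventually_add_mul_ne_zero {K : Type*} [Field K] [CharZero K] {β b : K}
    (h : ¬(b = 0 ∧ β = 0)) :
    ∀ᶠ k : ℤ in atTop, β + k * b ≠ 0 := by
  have hsub : {k : ℤ | β + k * b = 0}.Subsingleton := fun k (hk : _ = _) k' (hk' : _ = _) => by
    have hb : b ≠ 0 := fun hb => h ⟨hb, by simpa [hb] using hk⟩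
    have : ((k : K) - k') * b = 0 := by linear_combination hk - hk'
    exact_mod_cast sub_eq_zero.mp ((mul_eq_zero.mp this).resolve_right hb)
  simpa using hsub.finite.eventually_notMem_atTop

lemma smul_eq_zero_of_three_relations {R M : Type*} [CommRing R] [AddCommGroup M] [Module R M]
    {A₁ A₁' A₂ B₁ B₁' B₂ : R} {W₀ W₁ W₂ : M} (e₁ : A₁ • W₁ = B₁ • W₀) (e₂ : A₁' • W₂ = B₁' • W₁)
    (e₃ : A₂ • W₂ = B₂ • W₀) : (A₂ * B₁ * B₁' - B₂ * A₁ * A₁') • W₀ = 0 := by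
  linear_combination (norm := module) -(A₂ * B₁') • e₁ - (A₂ * A₁) • e₂ + (A₁ * A₁') • e₃

lemma eq_half_of_add_half_eq_zero {a : ℂ} (ha0 : 0 ≤ a.re) (ha1 : a.re < 1) {t : ℤ}
    (h : a + t + 1 / 2 = 0) : a = 1 / 2 ∧ t = -1 := by
  have hre : a.re + t + 1 / 2 = 0 := by simpa using congrArg Complex.re h
  have ht : t = -1 := by
    have h1 : (t : ℝ) < 0 := by linarith
    have h2 : (-2 : ℝ) < t := by linarith
    have h1' : t < 0 := by exact_mod_cast h1
    have h2' : -2 < t := by exact_mod_cast h2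
    omega
  subst ht
  exact ⟨by linear_combination h, rfl⟩

section Ladder

variable {K M : Type*} [Field K] [AddCommGroup M] [Module K M]

/-- The relations imposed by `D k = L_k` (`k ≥ 1`) on the coordinates `w m j` (along the `j`-th
basis vector) of the images of the `m`-th basis vectors; they hold off a set `Bad` of indices on
which `w` vanishes. -/
structure IsLadder (α β b₁ b₂ : K) (D : ℤ → M →ₗ[K] M) (Bad : Set ℤ) (w : ℤ → ℤ → M) :
    Prop where
  eq_zero_of_mem : ∀ m, ∀ j ∈ Bad, w m j = 0
  bdd : ∀ m, ∃ N, ∀ j, m + N < j → w m j = 0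
  rel : ∀ m k j : ℤ, 1 ≤ k → j ∉ Bad →
    (α + m + k * b₁) • w (m + k) j = D k (w m j) + (β + (j - k) + k * b₂) • w m (j - k)

namespace IsLadder

variable {α β b₁ b₂ : K} {D : ℤ → M →ₗ[K] M} {Bad : Set ℤ} {w : ℤ → ℤ → M}

lemma bdd_of_lt (hw : IsLadder α β b₁ b₂ D Bad w) {m m' N : ℤ} (hmm' : m < m')
    (hA : α + m + (m' - m : ℤ) * b₁ ≠ 0)
    (hN : ∀ j, m + N < j → w m j = 0) : ∀ j, m' + N < j → w m' j = 0 := by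
  intro j hj
  by_cases hjb : j ∈ Bad
  · exact hw.eq_zero_of_mem _ j hjb
  have h := hw.rel m (m' - m) j (by omega) hjb
  rw [hN j (by omega), map_zero, hN (j - (m' - m)) (by omega), smul_zero, zero_add,
    add_sub_cancel] at h
  exact (smul_eq_zero.mp h).resolve_left hA

/-- A row `m ≥ m₀ + 2` is reached from row `m₀` or `m₀ + 1` unless both coefficients vanish,
which forces `b₁ = 1` and then `m = -1`. -/
lemma uniform_bdd (hw : IsLadder α β b₁ b₂ D Bad w)
    (hb₁ : b₁ = 1 → ∀ t : ℤ, α + t = 0 → t = -1) (m₀ : ℤ) :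
    ∃ N, ∀ m, m₀ ≤ m → ∀ j, m + N < j → w m j = 0 := by
  obtain ⟨N₀, hN₀⟩ := hw.bdd m₀
  obtain ⟨N₁, hN₁⟩ := hw.bdd (m₀ + 1)
  obtain ⟨N₂, hN₂⟩ := hw.bdd (-1)
  refine ⟨max N₀ (max N₁ N₂), fun m hm j hj => ?_⟩
  rcases (show m = m₀ ∨ m = m₀ + 1 ∨ m₀ + 1 < m by omega) with rfl | rfl | hm
  · exact hN₀ j (by omega)
  · exact hN₁ j (by omega)
  by_cases hA₀ : α + m₀ + (m - m₀ : ℤ) * b₁ = 0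
  · by_cases hA₁ : α + (m₀ + 1 : ℤ) + (m - (m₀ + 1) : ℤ) * b₁ = 0
    · have hb₁' : b₁ = 1 := by push_cast at hA₀ hA₁; linear_combination hA₀ - hA₁
      rw [hb₁'] at hA₀
      obtain rfl : m = -1 := hb₁ hb₁' m (by push_cast at hA₀; linear_combination hA₀)
      exact hN₂ j (by omega)
    · exact hw.bdd_of_lt (by omega) hA₁ (fun j hj => hN₁ j (by omega)) j (by omega)
  · exact hw.bdd_of_lt (by omega) hA₀ (fun j hj => hN₀ j (by omega)) j (by omega)

lemma diag_rel (hw : IsLadder α β b₁ b₂ D Bad w) {m₀ N : ℤ}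
    (hbdd : ∀ m, m₀ ≤ m → ∀ j, m + N < j → w m j = 0) {m k : ℤ} (hm : m₀ ≤ m) (hk : 1 ≤ k)
    (hbad : m + k + N ∉ Bad) :
    (α + m + k * b₁) • w (m + k) (m + k + N) = (β + (m + N : ℤ) + k * b₂) • w m (m + N) := by
  have h := hw.rel m k (m + k + N) hk hbad
  rw [hbdd m hm _ (by omega), map_zero, zero_add, show m + k + N - k = m + N by ring] at h
  rw [h]
  push_cast
  ring_nf

/-- Eliminating between the diagonal relations for the steps `m → m + 1 → m + 2` and
`m → m + 2` leaves a quadratic in `α + m` with leading coefficient `β - α + N`. -/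
lemma eventually_diag_eq_zero [CharZero K] (hw : IsLadder α β b₁ b₂ D Bad w)
    (hBad : Bad ⊆ {-1}) {m₀ N : ℤ} (hd : β - α + N ≠ 0)
    (hbdd : ∀ m, m₀ ≤ m → ∀ j, m + N < j → w m j = 0) :
    ∀ᶠ m in atTop, w m (m + N) = 0 := by
  have hfin := (finite_setOf_cubic_sub_cubic_eq_zero (p₁ := 2 * b₁) (p₂ := β - α + N + b₂)
    (p₃ := 1 + (β - α + N) + b₂) (q₁ := β - α + N + 2 * b₂) (q₂ := b₁) (q₃ := 1 + b₁)
    (by contrapose! hd; linear_combination hd)).preimage (add_right_injective α).injOn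
  have hnotBad : ∀ j, -1 < j → j ∉ Bad := fun j hj hjB => by
    have : j = -1 := hBad hjB
    omega
  filter_upwards [(hfin.preimage (Int.cast_injective (α := K)).injOn).eventually_notMem_atTop,
    eventually_ge_atTop m₀, eventually_ge_atTop (-N)] with m hq hm hmN
  have e₁ := hw.diag_rel hbdd hm (k := 1) le_rfl (hnotBad _ (by omega))
  have e₂ := hw.diag_rel hbdd (m := m + 1) (by omega) (k := 1) le_rfl (hnotBad _ (by omega))
  have e₃ := hw.diag_rel hbdd hm (k := 2) (by norm_num) (hnotBad _ (by omega))
  rw [show m + 1 + 1 = m + 2 by ring] at e₂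
  refine (smul_eq_zero.mp (smul_eq_zero_of_three_relations e₁ e₂ e₃)).resolve_left fun h0 => hq ?_
  simp only [Set.mem_preimage, Set.mem_ofPred_eq]
  linear_combination (norm := (push_cast; ring_nf)) h0

lemma diag_eq_zero [CharZero K] (hw : IsLadder α β b₁ b₂ D Bad w) (hBad : Bad ⊆ {-1})
    (hb₂ : b₂ = 0 → ∀ j : ℤ, β + j = 0 → j ∈ Bad) {m₀ N : ℤ} (hd : β - α + N ≠ 0)
    (hbdd : ∀ m, m₀ ≤ m → ∀ j, m + N < j → w m j = 0) {m : ℤ} (hm : m₀ ≤ m) :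
    w m (m + N) = 0 := by
  by_cases hB : b₂ = 0 ∧ β + (m + N : ℤ) = 0
  · exact hw.eq_zero_of_mem m _ (hb₂ hB.1 _ hB.2)
  have hdiag := (tendsto_atTop_add_const_left atTop m tendsto_id).eventually
    (hw.eventually_diag_eq_zero hBad hd hbdd)
  obtain ⟨k, ⟨hk1, hkN⟩, hB', hk⟩ := ((eventually_ge_atTop 1).and (eventually_ge_atTop (-N - m))
    |>.and ((eventually_add_mul_ne_zero hB).and hdiag)).exists
  have e := hw.diag_rel hbdd hm hk1 fun hB => by
    have : m + k + N = -1 := hBad hB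
    omega
  simp only [id] at hk
  rw [hk, smul_zero] at e
  exact (smul_eq_zero.mp e.symm).resolve_left hB'

theorem eq_zero [CharZero K] (hw : IsLadder α β b₁ b₂ D Bad w) (hBad : Bad ⊆ {-1})
    (hb₁ : b₁ = 1 → ∀ t : ℤ, α + t = 0 → t = -1)
    (hb₂ : b₂ = 0 → ∀ j : ℤ, β + j = 0 → j ∈ Bad) {δ : ℤ}
    (hd : ∀ N, δ ≤ N → β - α + N ≠ 0) {m j : ℤ} (hj : m + δ ≤ j) : w m j = 0 := by
  obtain ⟨N₀, hN₀⟩ := hw.uniform_bdd hb₁ m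
  let P : ℤ → Prop := fun n => ∀ m', m ≤ m' → ∀ j, m' + n < j → w m' j = 0
  have hP : ∀ n (_ : n ≤ max N₀ (δ - 1)), δ - 1 ≤ n → P n := by
    refine Int.leInductionDown (fun _ m' hm' j hj => hN₀ m' hm' j (by omega)) ?_
    intro n _ ih hn m' hm' j' hj'
    rcases (show j' = m' + n ∨ m' + n < j' by omega) with rfl | hj'
    · exact hw.diag_eq_zero hBad hb₂ (hd n (by omega)) (ih (by omega)) hm'
    · exact ih (by omega) m' hm' j' hj'
  exact hP (δ - 1) (le_max_right _ _) le_rfl m le_rfl j (by omega)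

end IsLadder

end Ladder

namespace NSMod

variable {c : ℂ} (M : NSMod c)

def parity : M.carrier →ₗ[ℂ] M.carrier :=
  M.even.projection M.odd M.compl - M.odd.projection M.even M.compl.symm

structure IsEndomorphism (φ : M.carrier →ₗ[ℂ] M.carrier) : Prop where
  comm_L : ∀ (m : ℤ) (v : M.carrier), φ (M.L m v) = M.L m (φ v)
  comm_G : ∀ (k : ℤ) (v : M.carrier), φ (M.G k v) = M.G k (φ v)

variable {M}

lemma exists_even_add_odd (v : M.carrier) : ∃ e ∈ M.even, ∃ o ∈ M.odd, e + o = v := by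
  obtain ⟨e, o, he, ho, h⟩ := codisjoint_iff_exists_add_eq.mp M.compl.codisjoint v
  exact ⟨e, he, o, ho, h⟩

lemma parity_add {e o : M.carrier} (he : e ∈ M.even) (ho : o ∈ M.odd) :
    M.parity (e + o) = e - o := by
  simp [parity, projection_apply_of_mem_left, projection_apply_of_mem_right, he, ho]

lemma parity_of_mem_even {e : M.carrier} (he : e ∈ M.even) : M.parity e = e := by
  simpa using parity_add he M.odd.zero_mem

lemma parity_parity (v : M.carrier) : M.parity (M.parity v) = v := by
  obtain ⟨e, he, o, ho, rfl⟩ := exists_even_add_odd v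
  rw [parity_add he ho, sub_eq_add_neg, parity_add he (neg_mem ho), sub_neg_eq_add]

lemma parity_L (m : ℤ) (v : M.carrier) : M.parity (M.L m v) = M.L m (M.parity v) := by
  obtain ⟨e, he, o, ho, rfl⟩ := exists_even_add_odd v
  rw [map_add, parity_add (M.mapsL_even m e he) (M.mapsL_odd m o ho), parity_add he ho, map_sub]

lemma parity_G (k : ℤ) (v : M.carrier) : M.parity (M.G k v) = -M.G k (M.parity v) := by
  obtain ⟨e, he, o, ho, rfl⟩ := exists_even_add_odd v
  rw [map_add, add_comm, parity_add (M.mapsG_odd k o ho) (M.mapsG_even k e he),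
    parity_add he ho, map_sub, neg_sub]

lemma IsEndomorphism.sub_smul_id {φ : M.carrier →ₗ[ℂ] M.carrier} (hφ : M.IsEndomorphism φ)
    (z : ℂ) : M.IsEndomorphism (φ - z • LinearMap.id) :=
  ⟨fun m v => by simp [hφ.comm_L], fun k v => by simp [hφ.comm_G]⟩

lemma isEndomorphism_projection {W W' : Submodule ℂ M.carrier} (hW : M.IsSubmodule W)
    (hW' : M.IsSubmodule W') (h : IsCompl W W') :
    M.IsEndomorphism (W.projection W' h) := by
  have key : ∀ (f : M.carrier →ₗ[ℂ] M.carrier), (∀ v ∈ W, f v ∈ W) → (∀ v ∈ W', f v ∈ W') →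
      ∀ v, W.projection W' h (f v) = f (W.projection W' h v) := by
    intro f hfW hfW' v
    obtain ⟨w, hw, w', hw', rfl⟩ : ∃ w ∈ W, ∃ w' ∈ W', w + w' = v := by
      obtain ⟨w, w', hw, hw', h⟩ := codisjoint_iff_exists_add_eq.mp h.codisjoint v
      exact ⟨w, hw, w', hw', h⟩
    simp [projection_apply_of_mem_left h, projection_apply_of_mem_right h, hw, hw', hfW w hw,
      hfW' w' hw']
  exact ⟨fun m => key _ (hW.1 m) (hW'.1 m), fun k => key _ (hW.2 k) (hW'.2 k)⟩

lemma eq_bot_or_eq_bot_of_isCompl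
    (hscalar : ∀ φ, M.IsEndomorphism φ → ∃ z : ℂ, φ = z • LinearMap.id)
    {W W' : Submodule ℂ M.carrier} (hW : M.IsSubmodule W) (hW' : M.IsSubmodule W')
    (h : IsCompl W W') : W = ⊥ ∨ W' = ⊥ := by
  obtain ⟨z, hz⟩ := hscalar _ (isEndomorphism_projection hW hW' h)
  have hπ : ∀ v, W.projection W' h v = z • v := fun v => by simp [hz]
  by_cases hz0 : z = 0
  · refine Or.inl (eq_bot_iff.mpr fun w hw => ?_)
    simpa [projection_apply_of_mem_left h hw, hz0] using hπ w
  · refine Or.inr (eq_bot_iff.mpr fun w hw => ?_)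
    simpa [projection_apply_of_mem_right h hw, hz0] using (hπ w).symm

end NSMod

section HighestWeight

variable {c h : ℂ} {V : NSMod c} {u : V.carrier}

/-- `v` is a product of lowering operators applied to `u` that lowers the `L₀`-eigenvalue by
`n / 2`; `V.G (-(k + 1))` is the mode `G_{-k-1/2}`. -/
inductive IsMonomial (V : NSMod c) (u : V.carrier) : ℕ → V.carrier → Prop
  | self : IsMonomial V u 0 u
  | lowerL {n : ℕ} {v : V.carrier} (k : ℕ) :
      IsMonomial V u n v → IsMonomial V u (n + 2 * (k + 1)) (V.L (-(k + 1 : ℤ)) v)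
  | lowerG {n : ℕ} {v : V.carrier} (k : ℕ) :
      IsMonomial V u n v → IsMonomial V u (n + (2 * k + 1)) (V.G (-(k + 1 : ℤ)) v)

variable (V u) in
def monomialSpan : Submodule ℂ V.carrier := span ℂ {v | ∃ n, IsMonomial V u n v}

lemma IsMonomial.mem_monomialSpan {n : ℕ} {v : V.carrier} (hv : IsMonomial V u n v) :
    v ∈ monomialSpan V u :=
  subset_span ⟨n, hv⟩

lemma IsMonomial.eq_of_zero {v : V.carrier} (hv : IsMonomial V u 0 v) : v = u := by
  cases hv with
  | self => rfl

lemma IsMonomial.L_zero (hu : IsHW h V u) {n : ℕ} {v : V.carrier} (hv : IsMonomial V u n v) :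
    V.L 0 v = (h - n / 2) • v := by
  induction hv with
  | self => simpa using hu.hw0
  | @lowerL n v k _ ih =>
    have hc := V.rel_LL 0 (-(k + 1 : ℤ)) v
    rw [sub_eq_iff_eq_add', ih, if_neg (by omega)] at hc
    rw [hc, map_smul, zero_add]
    push_cast
    module
  | @lowerG n v k _ ih =>
    have hc := V.rel_LG 0 (-(k + 1 : ℤ)) v
    rw [sub_eq_iff_eq_add', ih] at hc
    rw [hc, map_smul, zero_add]
    push_cast
    module

lemma map_mem_monomialSpan {f : V.carrier →ₗ[ℂ] V.carrier}
    (hf : ∀ n v, IsMonomial V u n v → f v ∈ monomialSpan V u) {w : V.carrier}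
    (hw : w ∈ monomialSpan V u) : f w ∈ monomialSpan V u :=
  (span_le (p := (monomialSpan V u).comap f)).mpr (fun _ hv => hf _ _ hv.choose_spec) hw

lemma L_neg_mem_monomialSpan {m : ℤ} (hm : m < 0) {w : V.carrier} (hw : w ∈ monomialSpan V u) :
    V.L m w ∈ monomialSpan V u := by
  obtain ⟨k, rfl⟩ : ∃ k : ℕ, m = -(k + 1 : ℤ) := ⟨(-m - 1).toNat, by omega⟩
  exact map_mem_monomialSpan (fun _ _ hv => (hv.lowerL k).mem_monomialSpan) hw

lemma G_neg_mem_monomialSpan {m : ℤ} (hm : m < 0) {w : V.carrier} (hw : w ∈ monomialSpan V u) :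
    V.G m w ∈ monomialSpan V u := by
  obtain ⟨k, rfl⟩ : ∃ k : ℕ, m = -(k + 1 : ℤ) := ⟨(-m - 1).toNat, by omega⟩
  exact map_mem_monomialSpan (fun _ _ hv => (hv.lowerG k).mem_monomialSpan) hw

lemma IsMonomial.L_mem_and_G_mem (hu : IsHW h V u) {n : ℕ} {v : V.carrier}
    (hv : IsMonomial V u n v) :
    (∀ m, V.L m v ∈ monomialSpan V u) ∧ ∀ k, V.G k v ∈ monomialSpan V u := by
  induction hv with
  | self =>
    have hmem := (IsMonomial.self : IsMonomial V u 0 u).mem_monomialSpan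
    refine ⟨fun m => ?_, fun k => ?_⟩
    · rcases lt_trichotomy m 0 with hm | rfl | hm
      · exact L_neg_mem_monomialSpan hm hmem
      · exact hu.hw0 ▸ smul_mem _ _ hmem
      · simp [hu.hwL m hm]
    · rcases lt_or_ge k 0 with hk | hk
      · exact G_neg_mem_monomialSpan hk hmem
      · simp [hu.hwG k hk]
  | @lowerL n v k hv ih =>
    obtain ⟨ihL, ihG⟩ := ih
    have hk : -(k + 1 : ℤ) < 0 := by omega
    refine ⟨fun m => ?_, fun l => ?_⟩
    · rw [sub_eq_iff_eq_add'.mp (V.rel_LL m _ v)]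
      exact add_mem (L_neg_mem_monomialSpan hk (ihL m))
        (add_mem (smul_mem _ _ (ihL _)) (smul_mem _ _ hv.mem_monomialSpan))
    · rw [← sub_sub_cancel (V.L _ (V.G l v)) (V.G l (V.L _ v)), V.rel_LG]
      exact sub_mem (L_neg_mem_monomialSpan hk (ihG l)) (smul_mem _ _ (ihG _))
  | @lowerG n v k hv ih =>
    obtain ⟨ihL, ihG⟩ := ih
    have hk : -(k + 1 : ℤ) < 0 := by omega
    refine ⟨fun m => ?_, fun l => ?_⟩
    · rw [sub_eq_iff_eq_add'.mp (V.rel_LG m _ v)]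
      exact add_mem (G_neg_mem_monomialSpan hk (ihL m)) (smul_mem _ _ (ihG _))
    · rw [eq_sub_of_add_eq (V.rel_GG l _ v)]
      exact sub_mem (sub_mem (smul_mem _ _ (ihL _)) (smul_mem _ _ hv.mem_monomialSpan))
        (G_neg_mem_monomialSpan hk (ihG l))

lemma monomialSpan_eq_top (hu : IsHW h V u) : monomialSpan V u = ⊤ := by
  refine hu.gen _ ⟨fun m _ => ?_, fun k _ => ?_⟩ IsMonomial.self.mem_monomialSpan
  · exact map_mem_monomialSpan fun _ _ hv => (hv.L_mem_and_G_mem hu).1 m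
  · exact map_mem_monomialSpan fun _ _ hv => (hv.L_mem_and_G_mem hu).2 k

lemma IsHW.eigenspace_L_zero_le (hu : IsHW h V u) (ν : ℂ) :
    Module.End.eigenspace (V.L 0) ν
      ≤ ⨆ (n : ℕ) (_ : h - n / 2 = ν), span ℂ {v | IsMonomial V u n v} := by
  refine Module.End.eigenspace_le_iSup _ (fun n => span_le.mpr fun v hv => ?_) ?_ ν
  · exact Module.End.mem_eigenspace_iff.mpr (hv.L_zero hu)
  · rw [eq_top_iff, ← monomialSpan_eq_top hu]
    exact span_le.mpr fun v ⟨n, hv⟩ => mem_iSup_of_mem n (subset_span hv)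

lemma IsHW.eq_zero_of_L_zero_eq (hu : IsHW h V u) {t : ℤ} (ht : 0 < t) {v : V.carrier}
    (hv : V.L 0 v = (h + t / 2) • v) : v = 0 := by
  have hle := hu.eigenspace_L_zero_le (h + t / 2) (Module.End.mem_eigenspace_iff.mpr hv)
  have hne : ∀ n : ℕ, h - n / 2 ≠ h + t / 2 := fun n hn => by
    have : ((-n : ℤ) : ℂ) = t := by push_cast; linear_combination 2 * hn
    have : (-n : ℤ) = t := by exact_mod_cast this
    omega
  simpa [hne] using hle

lemma IsHW.exists_eq_smul_of_L_zero_eq (hu : IsHW h V u) {v : V.carrier}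
    (hv : V.L 0 v = h • v) : ∃ z : ℂ, v = z • u := by
  have hle := hu.eigenspace_L_zero_le h (Module.End.mem_eigenspace_iff.mpr hv)
  have hn : ∀ n : ℕ, h - n / 2 = h ↔ n = 0 := fun n => by simp
  simp only [hn, iSup_iSup_eq_left] at hle
  have hsub : span ℂ {v | IsMonomial V u 0 v} ≤ span ℂ {u} :=
    span_mono fun _ hv => hv.eq_of_zero
  obtain ⟨z, hz⟩ := mem_span_singleton.mp (hsub hle)
  exact ⟨z, hz.symm⟩

end HighestWeight

/-- Twice the subscript of `F.vec i`; the `L₀`-eigenvalue of `F.vec i` is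
`a + twiceIndex i / 2`. -/
def twiceIndex : ℤ ⊕ ℤ → ℤ := Sum.elim (2 * ·) (2 * · + 1)

namespace SA'Family

variable {a b : ℂ} {S : NSMod 0} (F : SA'Family a b S)

/-- `F.vec (.inl j) = x_j` and `F.vec (.inr j) = y_{j+1/2}`. -/
def vec : ℤ ⊕ ℤ → S.carrier := Sum.elim F.x F.y

lemma eq_neg_one_of_y_eq_zero {j : ℤ} (hj : F.y j = 0) : j = -1 := by
  by_contra hne
  by_cases hs : a = 1 / 2 ∧ b = 1 / 2
  · exact (F.indep_special hs).2.ne_zero (Sum.inr ⟨j, hne⟩) (by simpa using hj)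
  · exact (F.indep_generic hs).ne_zero (Sum.inr j) (by simpa using hj)

lemma y_eq_zero_of_add_half_eq_zero (ha0 : 0 ≤ a.re) (ha1 : a.re < 1) (hb : b = 1 / 2) {j : ℤ}
    (hj : a + 1 / 2 + j = 0) : F.y j = 0 := by
  obtain ⟨ha, rfl⟩ := eq_half_of_add_half_eq_zero ha0 ha1 (t := j) (by linear_combination hj)
  exact (F.indep_special ⟨ha, hb⟩).1

lemma linearIndependent_vec : LinearIndependent ℂ (fun i : {i // F.vec i ≠ 0} => F.vec i) := by
  by_cases hs : a = 1 / 2 ∧ b = 1 / 2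
  · let g : {i // F.vec i ≠ 0} → ℤ ⊕ {j : ℤ // j ≠ -1}
      | ⟨.inl j, _⟩ => .inl j
      | ⟨.inr j, hj⟩ => .inr ⟨j, fun h => hj (by simp [vec, h, (F.indep_special hs).1])⟩
    have hg : Function.Injective g := by
      rintro ⟨i | i, _⟩ ⟨i' | i', _⟩ h <;> simp_all [g]
    convert (F.indep_special hs).2.comp g hg with ⟨i | i, _⟩ <;> rfl
  · exact (F.indep_generic hs).comp _ Subtype.val_injective

lemma span_vec : span ℂ (Set.range fun i : {i // F.vec i ≠ 0} => F.vec i) = ⊤ := by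
  rw [eq_top_iff, ← F.spans, ← Set.Sum.elim_range, show Sum.elim F.x F.y = F.vec from rfl]
  refine span_le.mpr ?_
  rintro _ ⟨i, rfl⟩
  by_cases hi : F.vec i = 0
  · rw [hi]
    exact zero_mem _
  · exact subset_span ⟨⟨i, hi⟩, rfl⟩

def basis : Module.Basis {i // F.vec i ≠ 0} ℂ S.carrier :=
  .mk F.linearIndependent_vec F.span_vec.ge

lemma basis_apply (i : {i // F.vec i ≠ 0}) : F.basis i = F.vec i := by
  simp [basis]

open Classical in
/-- The coordinate dual to `F.vec i`, taken to be `0` when `F.vec i = 0` (which happens only for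
the image of `y_{-1/2}` in the quotient `SA'_{1/2,1/2}`). -/
def coord (i : ℤ ⊕ ℤ) : S.carrier →ₗ[ℂ] ℂ :=
  if h : F.vec i = 0 then 0 else F.basis.coord ⟨i, h⟩

lemma coord_eq_zero {i : ℤ ⊕ ℤ} (hi : F.vec i = 0) : F.coord i = 0 := by
  simp [coord, hi]

lemma coord_vec {i' : ℤ ⊕ ℤ} (hi' : F.vec i' ≠ 0) (i : ℤ ⊕ ℤ) :
    F.coord i (F.vec i') = if i' = i then 1 else 0 := by
  by_cases hi : F.vec i = 0
  · have : i' ≠ i := fun h => hi' (h ▸ hi)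
    simp [F.coord_eq_zero hi, this]
  · rw [coord, dif_neg hi, ← F.basis_apply ⟨i', hi'⟩, Module.Basis.coord_apply,
      Module.Basis.repr_self, Finsupp.single_apply]
    simp [Subtype.ext_iff]

lemma x_ne_zero (j : ℤ) : F.x j ≠ 0 := by
  by_cases hs : a = 1 / 2 ∧ b = 1 / 2
  · simpa using (F.indep_special hs).2.ne_zero (Sum.inl j)
  · simpa using (F.indep_generic hs).ne_zero (Sum.inl j)

lemma coord_x (i : ℤ ⊕ ℤ) (j : ℤ) : F.coord i (F.x j) = if .inl j = i then 1 else 0 :=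
  F.coord_vec (i' := .inl j) (F.x_ne_zero j) i

lemma coord_y {j : ℤ} (hj : F.y j ≠ 0) (i : ℤ ⊕ ℤ) :
    F.coord i (F.y j) = if .inr j = i then 1 else 0 :=
  F.coord_vec (i' := .inr j) hj i

lemma coord_inr_y {j : ℤ} (hj : F.y j ≠ 0) (i : ℤ) :
    F.coord (.inr j) (F.y i) = if i = j then 1 else 0 := by
  by_cases hi : F.y i = 0
  · have : i ≠ j := fun h => hj (h ▸ hi)
    simp [hi, this]
  · simp [F.coord_y hi]

lemma hom_ext {M : Type*} [AddCommGroup M] [Module ℂ M] {f g : S.carrier →ₗ[ℂ] M}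
    (h : ∀ i, F.vec i ≠ 0 → f (F.vec i) = g (F.vec i)) : f = g :=
  F.basis.ext fun i => by simpa [basis_apply] using h i i.2

lemma L_zero_vec (i : ℤ ⊕ ℤ) : S.L 0 (F.vec i) = (a + twiceIndex i / 2) • F.vec i := by
  rcases i with j | j
  · simp [vec, twiceIndex, F.act_Lx]
  · simp only [vec, twiceIndex, Sum.elim_inr, F.act_Ly]
    push_cast
    ring_nf

lemma coord_comp_L_zero (i : ℤ ⊕ ℤ) :
    F.coord i ∘ₗ S.L 0 = (a + twiceIndex i / 2) • F.coord i := by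
  refine F.hom_ext fun i' hi' => ?_
  simp only [LinearMap.comp_apply, F.L_zero_vec, map_smul, F.coord_vec hi', LinearMap.smul_apply]
  split_ifs with h <;> simp [h]

lemma coord_y_comp_L {j : ℤ} (hj : F.y j ≠ 0) (k : ℤ) :
    F.coord (.inr j) ∘ₗ S.L k
      = (a + 1 / 2 + (j - k) + k * (b - 1 / 2)) • F.coord (.inr (j - k)) := by
  refine F.hom_ext fun i hi => ?_
  rcases i with i | i
  · simp [vec, F.act_Lx, F.coord_x]
  · simp only [vec, Sum.elim_inr] at hi
    simp only [vec, Sum.elim_inr, LinearMap.comp_apply, F.act_Ly, map_smul, LinearMap.smul_apply,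
      F.coord_inr_y hj, F.coord_y hi, Sum.inr.injEq, smul_eq_mul]
    by_cases h : i = j - k
    · simp [h]
    · simp [h, show k + i ≠ j by omega]

lemma coord_y_comp_G {j : ℤ} (hj : F.y j ≠ 0) (k : ℤ) :
    F.coord (.inr j) ∘ₗ S.G k = F.coord (.inl (j - k)) := by
  refine F.hom_ext fun i hi => ?_
  rcases i with i | i
  · simp [vec, F.act_Gx, F.coord_inr_y hj, F.coord_x, eq_sub_iff_add_eq, add_comm]
  · simp only [vec, Sum.elim_inr] at hi
    simp [vec, F.act_Gy, F.coord_x, F.coord_y hi]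

end SA'Family

namespace IsTensorProduct

variable {R M₁ M₂ M : Type*} [CommRing R] [AddCommGroup M₁] [AddCommGroup M₂] [AddCommGroup M]
  [Module R M₁] [Module R M₂] [Module R M] {t : M₁ →ₗ[R] M₂ →ₗ[R] M}

lemma linearMap_ext (ht : IsTensorProduct t) {N : Type*} [AddCommGroup N] [Module R N]
    {f g : M →ₗ[R] N} (h : ∀ x y, f (t x y) = g (t x y)) : f = g := by
  ext z
  induction z using ht.inductionOn with
  | zero => simp
  | tmul x y => exact h x y
  | add z z' hz hz' => rw [map_add, map_add, hz, hz']

variable (ht : IsTensorProduct t)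

def contractRight (f : M₂ →ₗ[R] R) : M →ₗ[R] M₁ :=
  ht.lift (LinearMap.smulRightₗ f)

lemma contractRight_tmul (f : M₂ →ₗ[R] R) (x : M₁) (y : M₂) :
    ht.contractRight f (t x y) = f y • x := by
  simp [contractRight, ht.lift_eq]

lemma contractRight_zero : ht.contractRight (0 : M₂ →ₗ[R] R) = 0 :=
  ht.linearMap_ext fun x y => by simp [contractRight_tmul]

lemma contractRight_smul (r : R) (f : M₂ →ₗ[R] R) :
    ht.contractRight (r • f) = r • ht.contractRight f :=
  ht.linearMap_ext fun x y => by simp [contractRight_tmul, mul_smul]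

variable {ι : Type*} [DecidableEq ι] (b : Module.Basis ι R M₂)

def equivFinsupp : M ≃ₗ[R] (ι →₀ M₁) :=
  ht.equiv.symm ≪≫ₗ TensorProduct.congr (LinearEquiv.refl R M₁) b.repr ≪≫ₗ
    TensorProduct.finsuppScalarRight R R M₁ ι

lemma equivFinsupp_apply (z : M) (i : ι) :
    ht.equivFinsupp b z i = ht.contractRight (b.coord i) z := by
  have := ht.linearMap_ext (f := Finsupp.lapply i ∘ₗ (ht.equivFinsupp b).toLinearMap)
    (g := ht.contractRight (b.coord i)) fun x y => by
      simp [equivFinsupp, contractRight_tmul, TensorProduct.finsuppScalarRight_apply_tmul_apply]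
  exact LinearMap.congr_fun this z

lemma eq_zero_of_forall_contractRight {z : M} (hz : ∀ i, ht.contractRight (b.coord i) z = 0) :
    z = 0 :=
  (ht.equivFinsupp b).map_eq_zero_iff.mp (Finsupp.ext fun i => by simp [equivFinsupp_apply, hz])

lemma finite_contractRight_ne_zero (z : M) : {i | ht.contractRight (b.coord i) z ≠ 0}.Finite := by
  refine (ht.equivFinsupp b z).support.finite_toSet.subset fun i hi => ?_
  simpa [equivFinsupp_apply] using hi

end IsTensorProduct

namespace TensorWitness

variable {c : ℂ} {V : NSMod c} {S : NSMod 0} {T : NSMod c} (tw : TensorWitness V S T)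

lemma G_tmul (k : ℤ) (v : V.carrier) (s : S.carrier) :
    T.G k (tw.t v s) = tw.t (V.G k v) s + tw.t (V.parity v) (S.G k s) := by
  obtain ⟨e, he, o, ho, rfl⟩ := V.exists_even_add_odd v
  simp only [map_add, LinearMap.add_apply, tw.actG_even k e he, tw.actG_odd k o ho,
    V.parity_add he ho, map_sub, LinearMap.sub_apply]
  abel

lemma contractRight_L (f : S.carrier →ₗ[ℂ] ℂ) (k : ℤ) (z : T.carrier) :
    tw.isTensor.contractRight f (T.L k z)
      = V.L k (tw.isTensor.contractRight f z) + tw.isTensor.contractRight (f ∘ₗ S.L k) z := by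
  have := tw.isTensor.linearMap_ext (f := tw.isTensor.contractRight f ∘ₗ T.L k)
    (g := V.L k ∘ₗ tw.isTensor.contractRight f + tw.isTensor.contractRight (f ∘ₗ S.L k))
    fun v s => by simp [IsTensorProduct.contractRight_tmul, tw.actL]
  exact LinearMap.congr_fun this z

lemma contractRight_G (f : S.carrier →ₗ[ℂ] ℂ) (k : ℤ) (z : T.carrier) :
    tw.isTensor.contractRight f (T.G k z) = V.G k (tw.isTensor.contractRight f z)
      + V.parity (tw.isTensor.contractRight (f ∘ₗ S.G k) z) := by
  have := tw.isTensor.linearMap_ext (f := tw.isTensor.contractRight f ∘ₗ T.G k)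
    (g := V.G k ∘ₗ tw.isTensor.contractRight f
      + V.parity ∘ₗ tw.isTensor.contractRight (f ∘ₗ S.G k))
    fun v s => by simp [IsTensorProduct.contractRight_tmul, tw.G_tmul]
  exact LinearMap.congr_fun this z

end TensorWitness

namespace SA'Family

variable {a b c : ℂ} {V : NSMod c} {S : NSMod 0} {T : NSMod c} (F : SA'Family a b S)
  (tw : TensorWitness V S T)

lemma eq_zero_of_forall_contractRight {z : T.carrier}
    (hz : ∀ i, tw.isTensor.contractRight (F.coord i) z = 0) : z = 0 :=
  tw.isTensor.eq_zero_of_forall_contractRight F.basis fun i => by simpa [coord, i.2] using hz i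

lemma exists_contractRight_y_eq_zero (z : T.carrier) :
    ∃ N, ∀ j, N < j → tw.isTensor.contractRight (F.coord (.inr j)) z = 0 := by
  have hfin : {i | tw.isTensor.contractRight (F.coord i) z ≠ 0}.Finite := by
    refine ((tw.isTensor.finite_contractRight_ne_zero F.basis z).image Subtype.val).subset
      fun i hi => ?_
    by_cases h : F.vec i = 0
    · simp [F.coord_eq_zero h, IsTensorProduct.contractRight_zero] at hi
    · exact ⟨⟨i, h⟩, by simpa [coord, h] using hi, rfl⟩
  obtain ⟨N, hN⟩ := (hfin.preimage Sum.inr_injective.injOn).bddAbove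
  exact ⟨N, fun j hj => by_contra fun h => absurd (hN h) (not_le.mpr hj)⟩

end SA'Family

section Endomorphism

variable {a b c h : ℂ} {V : NSMod c} {u : V.carrier} {S : NSMod 0} {T : NSMod c}
  (tw : TensorWitness V S T)

lemma TensorWitness.L_tmul_of_isHW (hu : IsHW h V u) {k : ℤ} (hk : 1 ≤ k) (s : S.carrier) :
    T.L k (tw.t u s) = tw.t u (S.L k s) := by
  simp [tw.actL, hu.hwL k hk]

lemma TensorWitness.L_zero_tmul_of_isHW (hu : IsHW h V u) (s : S.carrier) :
    T.L 0 (tw.t u s) = h • tw.t u s + tw.t u (S.L 0 s) := by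
  simp [tw.actL, hu.hw0]

lemma TensorWitness.G_tmul_of_isHW (hu : IsHW h V u) {k : ℤ} (hk : 0 ≤ k) (s : S.carrier) :
    T.G k (tw.t u s) = tw.t u (S.G k s) := by
  simp [tw.actG_even k u hu.mem_even, hu.hwG k hk]

def SA'Family.entry (F : SA'Family a b S) (tw : TensorWitness V S T) (u : V.carrier)
    (φ : T.carrier →ₗ[ℂ] T.carrier) (i : ℤ ⊕ ℤ) (s : S.carrier) : V.carrier :=
  tw.isTensor.contractRight (F.coord i) (φ (tw.t u s))

variable {F : SA'Family a b S} {tw} {φ : T.carrier →ₗ[ℂ] T.carrier}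

namespace SA'Family

lemma entry_smul (i : ℤ ⊕ ℤ) (r : ℂ) (s : S.carrier) :
    F.entry tw u φ i (r • s) = r • F.entry tw u φ i s := by
  simp [entry]

lemma entry_weight (hu : IsHW h V u) (hφ : T.IsEndomorphism φ) (i i' : ℤ ⊕ ℤ) :
    V.L 0 (F.entry tw u φ i (F.vec i'))
      = (h + (twiceIndex i' - twiceIndex i : ℤ) / 2) • F.entry tw u φ i (F.vec i') := by
  have hL := tw.contractRight_L (F.coord i) 0 (φ (tw.t u (F.vec i')))
  rw [← hφ.comm_L, tw.L_zero_tmul_of_isHW hu, F.L_zero_vec, F.coord_comp_L_zero,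
    IsTensorProduct.contractRight_smul, map_smul, ← add_smul, map_smul, map_smul,
    LinearMap.smul_apply] at hL
  simp only [entry]
  rw [eq_sub_of_add_eq hL.symm, ← sub_smul]
  push_cast
  ring_nf

lemma entry_eq_zero_of_lt (hu : IsHW h V u) (hφ : T.IsEndomorphism φ) {i i' : ℤ ⊕ ℤ}
    (hlt : twiceIndex i < twiceIndex i') : F.entry tw u φ i (F.vec i') = 0 :=
  hu.eq_zero_of_L_zero_eq (by omega) (F.entry_weight hu hφ i i')

lemma exists_entry_eq_smul (hu : IsHW h V u) (hφ : T.IsEndomorphism φ) (i : ℤ ⊕ ℤ) :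
    ∃ z : ℂ, F.entry tw u φ i (F.vec i) = z • u :=
  hu.exists_eq_smul_of_L_zero_eq (by simpa using F.entry_weight hu hφ i i)

lemma entry_y_L (hu : IsHW h V u) (hφ : T.IsEndomorphism φ) {j : ℤ} (hj : F.y j ≠ 0) {k : ℤ}
    (hk : 1 ≤ k) (s : S.carrier) :
    F.entry tw u φ (.inr j) (S.L k s) = V.L k (F.entry tw u φ (.inr j) s)
      + (a + 1 / 2 + (j - k) + k * (b - 1 / 2)) • F.entry tw u φ (.inr (j - k)) s := by
  simp only [entry]
  rw [← tw.L_tmul_of_isHW hu hk, hφ.comm_L, tw.contractRight_L, F.coord_y_comp_L hj,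
    IsTensorProduct.contractRight_smul, LinearMap.smul_apply]

lemma entry_y_G (hu : IsHW h V u) (hφ : T.IsEndomorphism φ) {j : ℤ} (hj : F.y j ≠ 0) {k : ℤ}
    (hk : 0 ≤ k) (s : S.carrier) :
    F.entry tw u φ (.inr j) (S.G k s)
      = V.G k (F.entry tw u φ (.inr j) s) + V.parity (F.entry tw u φ (.inl (j - k)) s) := by
  simp only [entry]
  rw [← tw.G_tmul_of_isHW hu hk, hφ.comm_G, tw.contractRight_G, F.coord_y_comp_G hj]

lemma exists_entry_y_eq_zero (s : S.carrier) :
    ∃ N, ∀ j, N < j → F.entry tw u φ (.inr j) s = 0 :=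
  F.exists_contractRight_y_eq_zero tw _

lemma isLadder_entry_y_x (hu : IsHW h V u) (hφ : T.IsEndomorphism φ) :
    IsLadder a (a + 1 / 2) b (b - 1 / 2) V.L {j | F.y j = 0}
      (fun m j => F.entry tw u φ (.inr j) (F.x m)) where
  eq_zero_of_mem m j hj := by
    simp [entry, F.coord_eq_zero (i := .inr j) hj, IsTensorProduct.contractRight_zero]
  bdd m := by
    obtain ⟨N, hN⟩ := F.exists_entry_y_eq_zero (tw := tw) (u := u) (φ := φ) (F.x m)
    exact ⟨N - m, fun j hj => hN j (by omega)⟩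
  rel m k j hk hj := by
    have := F.entry_y_L (tw := tw) hu hφ hj hk (F.x m)
    rwa [F.act_Lx, entry_smul, add_comm k m] at this

lemma isLadder_entry_y_y (hu : IsHW h V u) (hφ : T.IsEndomorphism φ) :
    IsLadder (a + 1 / 2) (a + 1 / 2) (b - 1 / 2) (b - 1 / 2) V.L {j | F.y j = 0}
      (fun m j => F.entry tw u φ (.inr j) (F.y m)) where
  eq_zero_of_mem m j hj := by
    simp [entry, F.coord_eq_zero (i := .inr j) hj, IsTensorProduct.contractRight_zero]
  bdd m := by
    obtain ⟨N, hN⟩ := F.exists_entry_y_eq_zero (tw := tw) (u := u) (φ := φ) (F.y m)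
    exact ⟨N - m, fun j hj => hN j (by omega)⟩
  rel m k j hk hj := by
    have := F.entry_y_L (tw := tw) hu hφ hj hk (F.y m)
    rwa [F.act_Ly, entry_smul, add_comm k m] at this

lemma entry_y_x_eq_zero (ha0 : 0 ≤ a.re) (ha1 : a.re < 1) (hb : b ≠ 1) (hu : IsHW h V u)
    (hφ : T.IsEndomorphism φ) (j m : ℤ) : F.entry tw u φ (.inr j) (F.x m) = 0 := by
  rcases lt_or_ge j m with hjm | hjm
  · exact F.entry_eq_zero_of_lt hu hφ (i := .inr j) (i' := .inl m) (by simp [twiceIndex]; omega)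
  refine (F.isLadder_entry_y_x hu hφ).eq_zero (fun j hj => F.eq_neg_one_of_y_eq_zero hj)
    (fun hb' => absurd hb' hb) ?_ (δ := 0) (fun N hN => ?_) (by omega)
  · exact fun hb' j hj => F.y_eq_zero_of_add_half_eq_zero ha0 ha1 (by linear_combination hb') hj
  · have : (2 * N + 1 : ℤ) ≠ 0 := by omega
    contrapose! this
    exact_mod_cast (by linear_combination 2 * this : (2 * N + 1 : ℂ) = 0)

lemma entry_y_y_eq_zero (ha0 : 0 ≤ a.re) (ha1 : a.re < 1) (hu : IsHW h V u)
    (hφ : T.IsEndomorphism φ) {j m : ℤ} (hjm : j ≠ m) : F.entry tw u φ (.inr j) (F.y m) = 0 := by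
  rcases lt_or_gt_of_ne hjm with hjm | hjm
  · exact F.entry_eq_zero_of_lt hu hφ (i := .inr j) (i' := .inr m) (by simp [twiceIndex]; omega)
  refine (F.isLadder_entry_y_y hu hφ).eq_zero (fun j hj => F.eq_neg_one_of_y_eq_zero hj)
    (fun _ t ht => (eq_half_of_add_half_eq_zero ha0 ha1 (by linear_combination ht)).2) ?_
    (δ := 1) (fun N hN => ?_) (by omega)
  · exact fun hb' j hj => F.y_eq_zero_of_add_half_eq_zero ha0 ha1 (by linear_combination hb') hj
  · have : N ≠ 0 := by omega
    contrapose! this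
    exact_mod_cast (by linear_combination this : (N : ℂ) = 0)

lemma exists_y_ne_zero (j : ℤ) : ∃ n, j ≤ n ∧ n ≤ j + 1 ∧ F.y n ≠ 0 := by
  by_cases hj : j = -1
  · exact ⟨0, by omega, by omega, fun h0 => absurd (F.eq_neg_one_of_y_eq_zero h0) (by omega)⟩
  · exact ⟨j, le_rfl, by omega, fun h0 => hj (F.eq_neg_one_of_y_eq_zero h0)⟩

lemma entry_x_x_eq_zero (ha0 : 0 ≤ a.re) (ha1 : a.re < 1) (hb : b ≠ 1) (hu : IsHW h V u)
    (hφ : T.IsEndomorphism φ) {j m : ℤ} (hjm : j ≠ m) : F.entry tw u φ (.inl j) (F.x m) = 0 := by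
  rcases lt_or_gt_of_ne hjm with hjm | hjm
  · exact F.entry_eq_zero_of_lt hu hφ (i := .inl j) (i' := .inl m) (by simp [twiceIndex]; omega)
  obtain ⟨n, hjn, hnj, hn⟩ := F.exists_y_ne_zero j
  have hG := F.entry_y_G (tw := tw) hu hφ hn (k := n - j) (by omega) (F.x m)
  rw [F.act_Gx, F.entry_y_y_eq_zero ha0 ha1 hu hφ (by omega),
    F.entry_y_x_eq_zero ha0 ha1 hb hu hφ, map_zero, zero_add, sub_sub_cancel] at hG
  simpa [NSMod.parity_parity] using congrArg V.parity hG.symm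

lemma entry_x_y_eq_zero (ha0 : 0 ≤ a.re) (ha1 : a.re < 1) (hb : b ≠ 1) (hu : IsHW h V u)
    (hφ : T.IsEndomorphism φ) (j m : ℤ) : F.entry tw u φ (.inl j) (F.y m) = 0 := by
  rcases le_or_gt j m with hjm | hjm
  · exact F.entry_eq_zero_of_lt hu hφ (i := .inl j) (i' := .inr m) (by simp [twiceIndex]; omega)
  obtain ⟨n, hjn, hnj, hn⟩ := F.exists_y_ne_zero j
  have hG := F.entry_y_G (tw := tw) hu hφ hn (k := n - j) (by omega) (F.y m)
  rw [F.act_Gy, entry_smul, F.entry_y_x_eq_zero ha0 ha1 hb hu hφ,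
    F.entry_y_y_eq_zero ha0 ha1 hu hφ (by omega), map_zero, zero_add, sub_sub_cancel,
    smul_zero] at hG
  simpa [NSMod.parity_parity] using congrArg V.parity hG.symm

lemma entry_eq_zero_of_ne (ha0 : 0 ≤ a.re) (ha1 : a.re < 1) (hb : b ≠ 1) (hu : IsHW h V u)
    (hφ : T.IsEndomorphism φ) {i i' : ℤ ⊕ ℤ} (hii' : i ≠ i') :
    F.entry tw u φ i (F.vec i') = 0 := by
  rcases i with j | j <;> rcases i' with m | m
  · exact F.entry_x_x_eq_zero ha0 ha1 hb hu hφ (by simpa using hii')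
  · exact F.entry_x_y_eq_zero ha0 ha1 hb hu hφ j m
  · exact F.entry_y_x_eq_zero ha0 ha1 hb hu hφ j m
  · exact F.entry_y_y_eq_zero ha0 ha1 hu hφ (by simpa using hii')

/-- `G_{n-m+1/2}` carries `u ⊗ x_m` to `u ⊗ y_{n+1/2}`, which links the diagonal entries. -/
lemma entry_y_y_eq_entry_x_x (ha0 : 0 ≤ a.re) (ha1 : a.re < 1) (hb : b ≠ 1) (hu : IsHW h V u)
    (hφ : T.IsEndomorphism φ) {m n : ℤ} (hmn : m ≤ n) (hn : F.y n ≠ 0) :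
    F.entry tw u φ (.inr n) (F.y n) = F.entry tw u φ (.inl m) (F.x m) := by
  have hG := F.entry_y_G (tw := tw) hu hφ hn (k := n - m) (by omega) (F.x m)
  obtain ⟨z, hz⟩ := F.exists_entry_eq_smul (tw := tw) hu hφ (.inl m)
  rw [F.act_Gx, sub_add_cancel, sub_sub_cancel, F.entry_y_x_eq_zero ha0 ha1 hb hu hφ, map_zero,
    zero_add] at hG
  rw [hG, show F.x m = F.vec (.inl m) from rfl, hz,
    V.parity_of_mem_even (smul_mem _ _ hu.mem_even)]

lemma exists_entry_diag_eq_smul (ha0 : 0 ≤ a.re) (ha1 : a.re < 1) (hb : b ≠ 1)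
    (hu : IsHW h V u) (hφ : T.IsEndomorphism φ) :
    ∃ z : ℂ, ∀ i, F.vec i ≠ 0 → F.entry tw u φ i (F.vec i) = z • u := by
  obtain ⟨z, hz⟩ := F.exists_entry_eq_smul (tw := tw) hu hφ (.inl 0)
  have hx : ∀ m, F.entry tw u φ (.inl m) (F.x m) = z • u := fun m => by
    obtain ⟨n, hn, -, hyn⟩ := F.exists_y_ne_zero (max m 0)
    rw [← F.entry_y_y_eq_entry_x_x ha0 ha1 hb hu hφ (m := m) (by omega) hyn,
      F.entry_y_y_eq_entry_x_x ha0 ha1 hb hu hφ (m := 0) (by omega) hyn]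
    exact hz
  refine ⟨z, fun i hi => ?_⟩
  rcases i with m | n
  · exact hx m
  · exact (F.entry_y_y_eq_entry_x_x ha0 ha1 hb hu hφ le_rfl hi).trans (hx n)

lemma exists_apply_tmul_eq_smul (F : SA'Family a b S) (tw : TensorWitness V S T)
    (ha0 : 0 ≤ a.re) (ha1 : a.re < 1) (hb : b ≠ 1) (hu : IsHW h V u) (hφ : T.IsEndomorphism φ) :
    ∃ z : ℂ, ∀ s, φ (tw.t u s) = z • tw.t u s := by
  obtain ⟨z, hz⟩ := F.exists_entry_diag_eq_smul (tw := tw) ha0 ha1 hb hu hφ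
  refine ⟨z, fun s => LinearMap.congr_fun (F.hom_ext (f := φ ∘ₗ tw.t u) (g := z • tw.t u)
    fun i' hi' => sub_eq_zero.mp (F.eq_zero_of_forall_contractRight tw fun i => ?_)) s⟩
  rw [LinearMap.comp_apply, LinearMap.smul_apply, map_sub, map_smul,
    IsTensorProduct.contractRight_tmul, F.coord_vec hi']
  by_cases h : i' = i
  · subst h
    rw [if_pos rfl, one_smul]
    exact sub_eq_zero.mpr (hz i' hi')
  · rw [if_neg h, zero_smul, smul_zero, sub_zero]
    exact F.entry_eq_zero_of_ne ha0 ha1 hb hu hφ (Ne.symm h)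

end SA'Family

/-- The `v` with `χ (v ⊗ S) = 0` and `χ (parity v ⊗ S) = 0` form a submodule of `V`;
it contains `u`, which generates `V`. -/
lemma TensorWitness.eq_zero_of_apply_tmul_eq_zero (hu : IsHW h V u)
    {χ : T.carrier →ₗ[ℂ] T.carrier} (hχ : T.IsEndomorphism χ) (h0 : ∀ s, χ (tw.t u s) = 0) :
    χ = 0 := by
  let A : Submodule ℂ V.carrier := LinearMap.ker (tw.t.compr₂ χ)
  have hA : ∀ v, v ∈ A ↔ ∀ s, χ (tw.t v s) = 0 := fun v => by
    simp [A, LinearMap.ext_iff]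
  have hL : ∀ m, ∀ v ∈ A, V.L m v ∈ A := by
    intro m v hv
    refine (hA _).mpr fun s => ?_
    rw [eq_sub_of_add_eq (tw.actL m v s).symm, map_sub, hχ.comm_L, (hA v).mp hv, (hA v).mp hv,
      map_zero, sub_zero]
  have hG : ∀ k, ∀ v ∈ A, V.parity v ∈ A → V.G k v ∈ A := by
    intro k v hv hv'
    refine (hA _).mpr fun s => ?_
    rw [eq_sub_of_add_eq (tw.G_tmul k v s).symm, map_sub, hχ.comm_G, (hA v).mp hv,
      (hA _).mp hv', map_zero, sub_zero]
  have hW : V.IsSubmodule (A ⊓ A.comap V.parity) := by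
    refine ⟨fun m v ⟨hv, hv'⟩ => ⟨hL m v hv, ?_⟩, fun k v ⟨hv, hv'⟩ => ⟨hG k v hv hv', ?_⟩⟩
    · simpa [mem_comap, NSMod.parity_L] using hL m _ hv'
    · simpa [mem_comap, NSMod.parity_G, NSMod.parity_parity] using
        hG k _ hv' (by simpa [NSMod.parity_parity] using hv)
  have hu' : u ∈ A := (hA u).mpr h0
  have htop := hu.gen _ hW
    ⟨hu', by simpa [mem_comap, V.parity_of_mem_even hu.mem_even] using hu'⟩
  exact tw.isTensor.linearMap_ext fun v s => by
    simpa using (hA v).mp (htop ▸ mem_top : v ∈ A ⊓ A.comap V.parity).1 s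

lemma SA'Family.eq_smul_id (F : SA'Family a b S) (tw : TensorWitness V S T) (ha0 : 0 ≤ a.re)
    (ha1 : a.re < 1) (hb : b ≠ 1) (hu : IsHW h V u) (hφ : T.IsEndomorphism φ) :
    ∃ z : ℂ, φ = z • LinearMap.id := by
  obtain ⟨z, hz⟩ := F.exists_apply_tmul_eq_smul tw ha0 ha1 hb hu hφ
  refine ⟨z, sub_eq_zero.mp (tw.eq_zero_of_apply_tmul_eq_zero hu (hφ.sub_smul_id z) fun s => ?_)⟩
  simp [hz]

end Endomorphism

/-- Theorem 2.2: every linear endomorphism of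
`V ⊗ SA'_{a,b}` commuting with all operators `L_m` and `G_r` is a scalar,
i.e. `End(V ⊗ SA'_{a,b}) ≅ ℂ`; in particular `V ⊗ SA'_{a,b}` is
indecomposable. -/
theorem tensor_endomorphisms_scalar (a b c h : ℂ)
    (ha0 : 0 ≤ a.re) (ha1 : a.re < 1) (hb : b ≠ 1)
    (V : NSMod c) (u : V.carrier) (hu : IsHW h V u)
    (S : NSMod 0) (F : SA'Family a b S)
    (T : NSMod c) (tw : TensorWitness V S T) :
    (∀ φ : T.carrier →ₗ[ℂ] T.carrier,
      (∀ (m : ℤ) (v : T.carrier), φ (T.L m v) = T.L m (φ v)) →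
      (∀ (k : ℤ) (v : T.carrier), φ (T.G k v) = T.G k (φ v)) →
      ∃ z : ℂ, φ = z • (LinearMap.id : T.carrier →ₗ[ℂ] T.carrier)) ∧
    (∀ W W' : Submodule ℂ T.carrier, T.IsSubmodule W → T.IsSubmodule W' →
      IsCompl W W' → W = ⊥ ∨ W' = ⊥) := by
  have hscalar : ∀ φ, T.IsEndomorphism φ → ∃ z : ℂ, φ = z • LinearMap.id :=
    fun φ hφ => F.eq_smul_id tw ha0 ha1 hb hu hφ
  exact ⟨fun φ hL hG => hscalar φ ⟨hL, hG⟩,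
    fun W W' hW hW' h => NSMod.eq_bot_or_eq_bot_of_isCompl hscalar hW hW' h⟩
end
end

section
/- Let a, b, c, h ∈ ℂ with 0 ≤ Re(a) < 1 and b ≠ 1, and let M = M(c, h) be the Verma module over the Neveu–Schwarz algebra with highest weight vector u of highest weight (c, h). Then the tensor product module M ⊗ SA'_{a,b} is reducible: it possesses a submodule different from 0 and from the whole module. -/
noncomputable section

open Submodule

/-!
Let `W ⊆ M(c,h) ⊗ SA'_{a,b}` be spanned by the words in negative modes applied to the vectors
`u ⊗ v_m` with `m > 0`. The modes `L_n`, `G_r` with `n, r ≥ 0` rescale or kill `u` and do not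
lower the index of `v_m`, so they keep `span {u ⊗ v_m : m > 0}` stable, and the commutation
relations make `W` a submodule; it contains `u ⊗ v_1 ≠ 0`.

By PBW straightening, `W` is spanned by the PBW monomials applied to the `u ⊗ v_m`, `m > 0`.
A PBW monomial acts on `u ⊗ s` as it acts on `u`, up to terms of lower PBW degree in `M`, so by
triangularity the PBW monomials applied to `u ⊗ v`, `v` running over the basis of `SA'_{a,b}`,
are linearly independent (`M ⊗ S` is free over the negative part). Hence `u ⊗ v_0 ∉ W`.
-/

theorem linearIndependent_of_triangular {ι R V α : Type*} [Ring R] [AddCommGroup V] [Module R V]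
    [LinearOrder α] {v : ι → V} (deg : ι → α) (f : ι → V →ₗ[R] R) (hdiag : ∀ i, f i (v i) = 1)
    (htri : ∀ i j, j ≠ i → deg j ≤ deg i → f i (v j) = 0) : LinearIndependent R v := by
  classical
  refine linearIndependent_iff'.mpr fun s g hg i hi => ?_
  by_contra hgi
  obtain ⟨i₀, hi₀, hmax⟩ :=
    (s.filter (g · ≠ 0)).exists_max_image deg ⟨i, Finset.mem_filter.mpr ⟨hi, hgi⟩⟩
  rw [Finset.mem_filter] at hi₀
  have hsum := congrArg (f i₀) hg
  rw [map_sum, map_zero, Finset.sum_eq_single_of_mem i₀ hi₀.1] at hsum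
  · simp [hdiag, hi₀.2] at hsum
  · intro j hj hji
    by_cases hgj : g j = 0
    · simp [hgj]
    · simp [htri i₀ j hji (hmax j (Finset.mem_filter.mpr ⟨hj, hgj⟩))]

lemma LinearIndependent.exists_coord {ι K V : Type*} [Field K] [AddCommGroup V] [Module K V]
    {v : ι → V} (hv : LinearIndependent K v) (i : ι) :
    ∃ f : V →ₗ[K] K, f (v i) = 1 ∧ ∀ j, j ≠ i → f (v j) = 0 := by
  obtain ⟨g, hg⟩ := (Finsupp.linearCombination K v).exists_leftInverse_of_injective
    (LinearMap.ker_eq_bot.mpr hv)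
  have hgv (j : ι) : g (v j) = Finsupp.single j 1 := by
    simpa using LinearMap.congr_fun hg (Finsupp.single j 1)
  exact ⟨Finsupp.lapply i ∘ₗ g, by simp [hgv], fun j hj => by simp [hgv, hj]⟩

lemma List.exists_eq_append_cons_cons_of_not_isChain {α : Type*} {R : α → α → Prop} :
    ∀ {N : List α}, ¬ N.IsChain R → ∃ A o₁ o₂ B, N = A ++ o₁ :: o₂ :: B ∧ ¬ R o₁ o₂
  | [], h => absurd List.IsChain.nil h
  | [o], h => absurd (List.IsChain.singleton o) h
  | o₁ :: o₂ :: N, h => by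
    by_cases h₁₂ : R o₁ o₂
    · obtain ⟨A, p₁, p₂, B, hN, hp⟩ :=
        List.exists_eq_append_cons_cons_of_not_isChain fun hc => h (hc.cons_cons h₁₂)
      exact ⟨o₁ :: A, p₁, p₂, B, by rw [hN]; rfl, hp⟩
    · exact ⟨[], o₁, o₂, N, rfl, h₁₂⟩

/-- `.inl k` stands for the mode `L_{-k}` and `.inr j` for `G_{-j}` (that is, `G_{-(j - 1/2)}`). -/
abbrev NegMode : Type := ℤ ⊕ ℤ

namespace NegMode

/-- Minus twice the mode index, so that the negative modes are those with `0 < deg`. -/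
def deg : NegMode → ℤ
  | .inl k => 2 * k
  | .inr j => 2 * j - 1

/-- Consecutive modes of the PBW monomials indexed by `VermaIndex` are `InOrder`. -/
def InOrder : NegMode → NegMode → Prop
  | .inl k₁, .inl k₂ => k₂ ≤ k₁
  | .inl _, .inr _ => True
  | .inr _, .inl _ => False
  | .inr j₁, .inr j₂ => j₂ < j₁

def inverted : NegMode → NegMode → Bool
  | .inl k₁, .inl k₂ => decide (k₁ < k₂)
  | .inl _, .inr _ => false
  | .inr _, .inl _ => true
  | .inr j₁, .inr j₂ => decide (j₁ < j₂)

lemma inverted_or_eq_of_not_inOrder {o₁ o₂ : NegMode} (h : ¬ InOrder o₁ o₂) :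
    inverted o₁ o₂ ∨ ∃ j, o₁ = .inr j ∧ o₂ = .inr j := by
  rcases o₁ with k₁ | j₁ <;> rcases o₂ with k₂ | j₂ <;> simp only [InOrder, inverted] at h ⊢
  · simp; omega
  · exact absurd trivial h
  · simp
  · simp; omega

lemma inverted_asymm {o₁ o₂ : NegMode} (h : inverted o₁ o₂) : inverted o₂ o₁ = false := by
  rcases o₁ with k₁ | j₁ <;> rcases o₂ with k₂ | j₂ <;> simp_all [inverted] <;> omega

def wordDeg (N : List NegMode) : ℤ := (N.map deg).sum

@[simp] lemma wordDeg_cons (o : NegMode) (N : List NegMode) :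
    wordDeg (o :: N) = o.deg + wordDeg N := List.sum_cons

@[simp] lemma wordDeg_append (A B : List NegMode) : wordDeg (A ++ B) = wordDeg A + wordDeg B := by
  simp [wordDeg]

def IsNegWord (N : List NegMode) : Prop := ∀ o ∈ N, 0 < o.deg

def inversions : List NegMode → ℕ
  | [] => 0
  | o :: N => N.countP (inverted o) + inversions N

lemma inversions_swap {o₁ o₂ : NegMode} (h : inverted o₁ o₂) (A B : List NegMode) :
    inversions (A ++ o₂ :: o₁ :: B) < inversions (A ++ o₁ :: o₂ :: B) := by
  induction A with
  | nil => simp [inversions, h, inverted_asymm h]; omega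
  | cons o A ih =>
    simp only [List.cons_append, inversions, List.countP_append, List.countP_cons]
    omega

end NegMode

open NegMode

def VermaIndex.word (P : VermaIndex) : List NegMode := P.1.1.map .inl ++ P.1.2.map .inr

def VermaIndex.nil : VermaIndex := ⟨([], []), .nil, by simp, .nil, by simp⟩

def VermaIndex.deg (P : VermaIndex) : ℤ := wordDeg P.word

lemma VermaIndex.exists_word_eq {N : List NegMode} (hN : N.IsChain InOrder)
    (hneg : IsNegWord N) : ∃ P : VermaIndex, P.word = N := by
  induction N with
  | nil => exact ⟨nil, rfl⟩
  | cons o N ih =>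
    obtain ⟨hhead, hN⟩ := List.isChain_cons.mp hN
    obtain ⟨⟨⟨A, B⟩, hA, hA1, hB, hB1⟩, rfl⟩ :=
      ih hN fun o' ho' => hneg o' (List.mem_cons_of_mem o ho')
    have ho := hneg o List.mem_cons_self
    rcases o with k | j
    · refine ⟨⟨(k :: A, B), List.isChain_cons.mpr ⟨?_, hA⟩, ?_, hB, hB1⟩, rfl⟩
      · exact fun a ha => hhead (.inl a) (by cases A <;> simp_all [VermaIndex.word])
      · simp only [NegMode.deg] at ho
        simpa [show 1 ≤ k by omega] using hA1
    · obtain rfl : A = [] := by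
        rcases A with _ | ⟨a, A⟩
        · rfl
        · exact absurd (hhead (.inl a) (by simp [VermaIndex.word])) id
      refine ⟨⟨([], j :: B), List.IsChain.nil, by simp, List.isChain_cons.mpr ⟨?_, hB⟩, ?_⟩, rfl⟩
      · exact fun b hb => hhead (.inr b) (by cases B <;> simp_all [VermaIndex.word])
      · simp only [NegMode.deg] at ho
        simpa [show 1 ≤ j by omega] using hB1

lemma VermaIndex.isNegWord_word (P : VermaIndex) : IsNegWord P.word := by
  obtain ⟨⟨A, B⟩, -, hA, -, hB⟩ := P
  simp only [IsNegWord, word, List.forall_mem_append, List.forall_mem_map, NegMode.deg]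
  exact ⟨fun k hk => by linarith [hA k hk], fun j hj => by linarith [hB j hj]⟩

namespace NSMod

variable {c : ℂ} (V : NSMod c)

def act : NegMode → V.carrier →ₗ[ℂ] V.carrier
  | .inl k => V.L (-k)
  | .inr j => V.G (-j)

def word (N : List NegMode) : V.carrier →ₗ[ℂ] V.carrier := (N.map V.act).prod

lemma word_nil_apply (z : V.carrier) : V.word [] z = z := rfl

lemma word_cons_apply (o : NegMode) (N : List NegMode) (z : V.carrier) :
    V.word (o :: N) z = V.act o (V.word N z) := by
  simp [word]

lemma word_append_apply (A B : List NegMode) (z : V.carrier) :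
    V.word (A ++ B) z = V.word A (V.word B z) := by
  simp [word, Module.End.mul_apply]

lemma vermaMonomial_eq_word (u : V.carrier) (P : VermaIndex) :
    vermaMonomial V u P.1 = V.word P.word u := by
  have foldr_eq (l : List (V.carrier →ₗ[ℂ] V.carrier)) (x : V.carrier) :
      l.foldr (fun f v => f v) x = l.prod x := by
    induction l <;> simp_all [Module.End.mul_apply]
  simp only [vermaMonomial, foldr_eq, VermaIndex.word, word, List.map_append, List.map_map,
    List.prod_append, Module.End.mul_apply]
  rfl

/-- The central terms of the relations vanish since the total degree is positive. -/
lemma act_act_eq_of_inverted {o₁ o₂ : NegMode} (h₁ : 0 < o₁.deg) (h₂ : 0 < o₂.deg)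
    (h : inverted o₁ o₂) : ∃ (o : NegMode) (ε s : ℂ), o.deg = o₁.deg + o₂.deg ∧
      ∀ y, V.act o₁ (V.act o₂ y) = ε • V.act o₂ (V.act o₁ y) + s • V.act o y := by
  rcases o₁ with k₁ | j₁ <;> rcases o₂ with k₂ | j₂ <;>
    simp only [NegMode.deg, inverted, decide_eq_true_eq, reduceCtorEq] at h₁ h₂ h
  · refine ⟨.inl (k₁ + k₂), 1, k₁ - k₂, by simp only [NegMode.deg]; ring, fun y => ?_⟩
    have := V.rel_LL (-k₁) (-k₂) y
    rw [if_neg (by omega), zero_smul, add_zero] at this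
    simp only [act, neg_add, one_smul]
    push_cast at this
    linear_combination (norm := module) this
  · refine ⟨.inr (k₂ + j₁), 1, j₁ - 1 / 2 - k₂ / 2, by simp only [NegMode.deg]; ring,
      fun y => ?_⟩
    have := V.rel_LG (-k₂) (-j₁) y
    simp only [act, one_smul, show -(k₂ + j₁) = -k₂ + -j₁ by ring]
    push_cast at this
    linear_combination (norm := module) -this
  · refine ⟨.inl (j₁ + j₂ - 1), -1, 2, by simp only [NegMode.deg]; ring, fun y => ?_⟩
    have := V.rel_GG (-j₁) (-j₂) y
    rw [if_neg (by omega), zero_smul, sub_zero] at this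
    simp only [act, show -(j₁ + j₂ - 1) = -j₁ + -j₂ + 1 by ring]
    linear_combination (norm := module) this

lemma act_inr_act_inr_self (j : ℤ) (y : V.carrier) :
    V.act (.inr j) (V.act (.inr j) y) = V.act (.inl (2 * j - 1)) y := by
  have := V.rel_GG (-j) (-j) y
  rw [if_neg (by omega), zero_smul, sub_zero, ← two_smul ℂ] at this
  simpa [act, show -j + -j + 1 = -(2 * j - 1) by ring] using smul_right_injective _ two_ne_zero this

def normalSpan (z : V.carrier) (m : ℤ) : Submodule ℂ V.carrier :=
  span ℂ ((fun P : VermaIndex => V.word P.word z) '' {P | P.deg ≤ m})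

lemma normalSpan_mono (z : V.carrier) {m m' : ℤ} (h : m ≤ m') :
    V.normalSpan z m ≤ V.normalSpan z m' :=
  span_mono (Set.image_mono fun _ hP => le_trans hP h)

/-- PBW straightening: swapping an out-of-order adjacent pair costs only words that are shorter
(a supercommutator, or `G_{-j}² = L_{-(2j-1)}`). -/
theorem word_mem_normalSpan (z : V.carrier) (N : List NegMode) (hN : IsNegWord N) :
    V.word N z ∈ V.normalSpan z (wordDeg N) := by
  by_cases hnorm : N.IsChain InOrder
  · obtain ⟨P, rfl⟩ := VermaIndex.exists_word_eq hnorm hN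
    exact subset_span ⟨P, le_refl P.deg, rfl⟩
  obtain ⟨A, o₁, o₂, B, rfl, hbad⟩ := List.exists_eq_append_cons_cons_of_not_isChain hnorm
  simp only [IsNegWord, List.forall_mem_append, List.forall_mem_cons] at hN
  obtain ⟨hA, h₁, h₂, hB⟩ := hN
  have hmid (o : NegMode) (ho : o.deg = o₁.deg + o₂.deg) :
      V.word A (V.act o (V.word B z)) ∈ V.normalSpan z (wordDeg (A ++ o₁ :: o₂ :: B)) := by
    have := word_mem_normalSpan z (A ++ o :: B) <| by
      simp only [IsNegWord, List.forall_mem_append, List.forall_mem_cons]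
      exact ⟨hA, by omega, hB⟩
    simpa [word_append_apply, word_cons_apply, ho, add_assoc] using this
  rw [word_append_apply, word_cons_apply, word_cons_apply]
  rcases inverted_or_eq_of_not_inOrder hbad with hinv | ⟨j, rfl, rfl⟩
  · obtain ⟨o, ε, s, ho, hcomm⟩ := V.act_act_eq_of_inverted h₁ h₂ hinv
    rw [hcomm, map_add, map_smul, map_smul]
    refine add_mem (smul_mem _ _ ?_) (smul_mem _ _ (hmid o ho))
    have := word_mem_normalSpan z (A ++ o₂ :: o₁ :: B) <| by
      simp only [IsNegWord, List.forall_mem_append, List.forall_mem_cons]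
      exact ⟨hA, h₂, h₁, hB⟩
    simpa [word_append_apply, word_cons_apply, add_left_comm] using this
  · rw [act_inr_act_inr_self]
    exact hmid _ (by simp only [NegMode.deg]; ring)
termination_by (N.length, inversions N)
decreasing_by
  all_goals subst_vars; rw [Prod.lex_def]
  · left; simp
  · exact .inr ⟨by simp, inversions_swap hinv A B⟩

section

def negSpan (Z : Set V.carrier) : Submodule ℂ V.carrier :=
  span ℂ {x | ∃ N z, IsNegWord N ∧ z ∈ Z ∧ x = V.word N z}

variable {V} {Z : Set V.carrier}

lemma subset_negSpan : Z ⊆ V.negSpan Z :=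
  fun z hz => subset_span ⟨[], z, by simp [IsNegWord], hz, rfl⟩

lemma act_mem_negSpan {o : NegMode} (ho : 0 < o.deg) {x : V.carrier} (hx : x ∈ V.negSpan Z) :
    V.act o x ∈ V.negSpan Z := by
  refine (span_le (p := (V.negSpan Z).comap (V.act o))).mpr ?_ hx
  rintro _ ⟨N, z, hN, hz, rfl⟩
  exact subset_span ⟨o :: N, z, List.forall_mem_cons.mpr ⟨ho, hN⟩, hz, by rw [word_cons_apply]⟩

lemma L_G_act_mem {W : Submodule ℂ V.carrier}
    (hW : ∀ o : NegMode, 0 < o.deg → ∀ x ∈ W, V.act o x ∈ W) {o : NegMode} (ho : 0 < o.deg)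
    {y : V.carrier} (hy : y ∈ W) (hL : ∀ m, V.L m y ∈ W) (hG : ∀ m, V.G m y ∈ W) (m : ℤ) :
    V.L m (V.act o y) ∈ W ∧ V.G m (V.act o y) ∈ W := by
  rcases o with k | j
  · constructor
    · rw [act, ← sub_add_cancel (V.L m (V.L (-k) y)) (V.L (-k) (V.L m y)), V.rel_LL]
      exact add_mem (add_mem (smul_mem _ _ (hL _)) (smul_mem _ _ hy)) (hW _ ho _ (hL m))
    · rw [act, ← sub_sub_cancel (V.L (-k) (V.G m y)) (V.G m (V.L (-k) y)), V.rel_LG]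
      exact sub_mem (hW _ ho _ (hG m)) (smul_mem _ _ (hG _))
  · constructor
    · rw [act, ← sub_add_cancel (V.L m (V.G (-j) y)) (V.G (-j) (V.L m y)), V.rel_LG]
      exact add_mem (smul_mem _ _ (hG _)) (hW _ ho _ (hL m))
    · rw [act, ← add_sub_cancel_right (V.G m (V.G (-j) y)) (V.G (-j) (V.G m y)), V.rel_GG]
      exact sub_mem (sub_mem (smul_mem _ _ (hL _)) (smul_mem _ _ hy)) (hW _ ho _ (hG m))

theorem isSubmodule_negSpan (hL : ∀ m : ℤ, 0 ≤ m → ∀ z ∈ Z, V.L m z ∈ span ℂ Z)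
    (hG : ∀ m : ℤ, 0 ≤ m → ∀ z ∈ Z, V.G m z ∈ span ℂ Z) : V.IsSubmodule (V.negSpan Z) := by
  have hspan : span ℂ Z ≤ V.negSpan Z := span_le.mpr subset_negSpan
  have hword (N : List NegMode) (hN : IsNegWord N) (z : V.carrier) (hz : z ∈ Z) (m : ℤ) :
      V.L m (V.word N z) ∈ V.negSpan Z ∧ V.G m (V.word N z) ∈ V.negSpan Z := by
    induction N generalizing m with
    | nil =>
      rw [word_nil_apply]
      rcases le_or_gt 0 m with hm | hm
      · exact ⟨hspan (hL m hm z hz), hspan (hG m hm z hz)⟩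
      · refine ⟨?_, ?_⟩
        · simpa [act] using act_mem_negSpan (o := .inl (-m)) (by simp [NegMode.deg]; omega)
            (subset_negSpan hz)
        · simpa [act] using act_mem_negSpan (o := .inr (-m)) (by simp [NegMode.deg]; omega)
            (subset_negSpan hz)
    | cons o N ih =>
      rw [IsNegWord, List.forall_mem_cons] at hN
      rw [word_cons_apply]
      exact L_G_act_mem (fun o ho x hx => act_mem_negSpan ho hx) hN.1
        (subset_span ⟨N, z, hN.2, hz, rfl⟩) (fun m => (ih hN.2 m).1) (fun m => (ih hN.2 m).2) m
  constructor <;> intro m x hx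
  · refine (span_le (p := (V.negSpan Z).comap (V.L m))).mpr ?_ hx
    rintro _ ⟨N, z, hN, hz, rfl⟩
    exact (hword N hN z hz m).1
  · refine (span_le (p := (V.negSpan Z).comap (V.G m))).mpr ?_ hx
    rintro _ ⟨N, z, hN, hz, rfl⟩
    exact (hword N hN z hz m).2

end

section

def IsHomogeneous (v : V.carrier) : Prop := v ∈ V.even ∨ v ∈ V.odd

variable {V}

lemma IsHomogeneous.act {v : V.carrier} (hv : V.IsHomogeneous v) (o : NegMode) :
    V.IsHomogeneous (V.act o v) := by
  rcases o with k | j <;> rcases hv with hv | hv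
  exacts [.inl (V.mapsL_even _ _ hv), .inr (V.mapsL_odd _ _ hv),
    .inr (V.mapsG_even _ _ hv), .inl (V.mapsG_odd _ _ hv)]

lemma IsHomogeneous.word {z : V.carrier} (hz : V.IsHomogeneous z) (N : List NegMode) :
    V.IsHomogeneous (V.word N z) := by
  induction N with
  | nil => exact hz
  | cons o N ih => rw [word_cons_apply]; exact ih.act o

end

end NSMod

lemma SA'Family.linearIndependent {a b : ℂ} {S : NSMod 0} (F : SA'Family a b S) :
    LinearIndependent ℂ (Sum.elim F.x fun j : {j : ℤ // j ≠ -1} => F.y j) := by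
  by_cases h : a = 1 / 2 ∧ b = 1 / 2
  · exact (F.indep_special h).2
  · have := (F.indep_generic h).comp (Sum.map id (Subtype.val (p := (· ≠ -1))))
      (Sum.map_injective.mpr ⟨Function.injective_id, Subtype.val_injective⟩)
    rwa [Sum.elim_comp_map] at this

lemma IsHW.L_eq_smul {c h : ℂ} {M : NSMod c} {u : M.carrier} (hu : IsHW h M u) {m : ℤ}
    (hm : 0 ≤ m) : ∃ r : ℂ, M.L m u = r • u := by
  rcases hm.eq_or_lt with rfl | hm
  · exact ⟨h, hu.hw0⟩
  · exact ⟨0, by rw [hu.hwL m hm, zero_smul]⟩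

namespace TensorWitness

variable {c : ℂ} {M : NSMod c} {S : NSMod 0} {T : NSMod c} (tw : TensorWitness M S T)

section Filtration

lemma act_tmul (o : NegMode) {m : M.carrier} (hm : M.IsHomogeneous m) (s : S.carrier) :
    ∃ ε : ℂ, T.act o (tw.t m s) = tw.t (M.act o m) s + ε • tw.t m (S.act o s) := by
  rcases o with k | j
  · exact ⟨1, by simp [NSMod.act, tw.actL]⟩
  · rcases hm with hm | hm
    · exact ⟨1, by simp [NSMod.act, tw.actG_even _ _ hm]⟩
    · exact ⟨-1, by simp [NSMod.act, tw.actG_odd _ _ hm, sub_eq_add_neg]⟩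

def filtration (u : M.carrier) (m : ℤ) : Submodule ℂ T.carrier :=
  map₂ tw.t (M.normalSpan u m) ⊤

variable {tw} {u : M.carrier}

lemma filtration_mono {m m' : ℤ} (h : m ≤ m') : tw.filtration u m ≤ tw.filtration u m' :=
  map₂_le_map₂_left (M.normalSpan_mono u h)

lemma act_mem_filtration (hu : M.IsHomogeneous u) {o : NegMode} (ho : 0 < o.deg) {m : ℤ}
    {x : T.carrier} (hx : x ∈ tw.filtration u m) : T.act o x ∈ tw.filtration u (m + o.deg) := by
  rw [filtration, NSMod.normalSpan, ← span_univ, map₂_span_span] at hx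
  refine (span_le (p := (tw.filtration u _).comap (T.act o))).mpr ?_ hx
  rintro _ ⟨_, ⟨P, hP, rfl⟩, s, -, rfl⟩
  obtain ⟨ε, hε⟩ := tw.act_tmul o (hu.word P.word) s
  rw [SetLike.mem_coe, mem_comap, hε]
  refine add_mem (apply_mem_map₂ _ ?_ mem_top) (smul_mem _ _ (apply_mem_map₂ _ ?_ mem_top))
  · rw [← NSMod.word_cons_apply]
    refine M.normalSpan_mono u ?_ (M.word_mem_normalSpan u _ ?_)
    · have : wordDeg P.word ≤ m := hP
      rw [wordDeg_cons]
      linarith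
    · simpa [IsNegWord, ho] using P.isNegWord_word
  · exact M.normalSpan_mono u (by omega) (subset_span ⟨P, hP, rfl⟩)

lemma word_tmul_sub_mem_filtration (hu : M.IsHomogeneous u) {N : List NegMode}
    (hN : IsNegWord N) (s : S.carrier) :
    T.word N (tw.t u s) - tw.t (M.word N u) s ∈ tw.filtration u (wordDeg N - 1) := by
  induction N with
  | nil => simp [NSMod.word_nil_apply]
  | cons o N ih =>
    simp only [IsNegWord, List.forall_mem_cons] at hN
    obtain ⟨ε, hε⟩ := tw.act_tmul o (hu.word N) s
    have hsplit : T.word (o :: N) (tw.t u s) - tw.t (M.word (o :: N) u) s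
        = T.act o (T.word N (tw.t u s) - tw.t (M.word N u) s)
          + ε • tw.t (M.word N u) (S.act o s) := by
      rw [map_sub, hε, NSMod.word_cons_apply, NSMod.word_cons_apply]
      abel
    rw [hsplit, wordDeg_cons]
    refine add_mem ?_ (smul_mem _ _ (apply_mem_map₂ _ ?_ mem_top))
    · convert act_mem_filtration hu hN.1 (ih hN.2) using 2
      ring
    · exact M.normalSpan_mono u (by omega) (M.word_mem_normalSpan u N hN.2)

/-- Freeness of `M ⊗ S` over the negative part of the algebra. -/
theorem linearIndependent_word_tmul (hu : M.IsHomogeneous u)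
    (hM : LinearIndependent ℂ fun P : VermaIndex => M.word P.word u)
    {ι : Type*} {w : ι → S.carrier} (hw : LinearIndependent ℂ w) :
    LinearIndependent ℂ fun γ : VermaIndex × ι => T.word γ.1.word (tw.t u (w γ.2)) := by
  choose f hf₁ hf₀ using hM.exists_coord
  choose g hg₁ hg₀ using hw.exists_coord
  let Ξ (γ : VermaIndex × ι) : T.carrier →ₗ[ℂ] ℂ :=
    tw.isTensor.lift ((LinearMap.mul ℂ ℂ).compl₁₂ (f γ.1) (g γ.2))
  have hΞ (γ : VermaIndex × ι) (m : M.carrier) (s : S.carrier) :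
      Ξ γ (tw.t m s) = f γ.1 m * g γ.2 s :=
    tw.isTensor.lift_eq _ m s
  have hlow (γ : VermaIndex × ι) : tw.filtration u (γ.1.deg - 1) ≤ LinearMap.ker (Ξ γ) := by
    refine map₂_le.mpr fun m hm s _ => ?_
    suffices M.normalSpan u (γ.1.deg - 1) ≤ LinearMap.ker (f γ.1) by
      simp [hΞ, LinearMap.mem_ker.mp (this hm)]
    refine span_le.mpr ?_
    rintro _ ⟨P, hP, rfl⟩
    exact hf₀ γ.1 P (by rintro rfl; exact (sub_one_lt γ.1.deg).not_ge hP)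
  have hlead (γ γ' : VermaIndex × ι) (h : γ'.1.deg ≤ γ.1.deg) :
      Ξ γ (T.word γ'.1.word (tw.t u (w γ'.2)))
        = f γ.1 (M.word γ'.1.word u) * g γ.2 (w γ'.2) := by
    have := hlow γ (filtration_mono (sub_le_sub_right h 1)
      (tw.word_tmul_sub_mem_filtration hu γ'.1.isNegWord_word (w γ'.2)))
    rwa [LinearMap.mem_ker, map_sub, sub_eq_zero, hΞ] at this
  refine linearIndependent_of_triangular (fun γ => γ.1.deg) Ξ
    (fun γ => by simp [hlead γ γ le_rfl, hf₁, hg₁]) fun γ γ' hne h => ?_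
  rw [hlead γ γ' h]
  by_cases h₁ : γ'.1 = γ.1
  · rw [hg₀ γ.2 γ'.2 fun h₂ => hne (Prod.ext h₁ h₂), mul_zero]
  · rw [hf₀ γ.1 γ'.1 h₁, zero_mul]

end Filtration

section PositivePart

variable {a b : ℂ} (u : M.carrier) (F : SA'Family a b S)

/-- The vectors `u ⊗ v_m` with `m > 0` (`F.y j` is `v_{j+1/2}`). -/
def positivePart : Set T.carrier :=
  {z | (∃ j, 1 ≤ j ∧ z = tw.t u (F.x j)) ∨ ∃ j, 0 ≤ j ∧ z = tw.t u (F.y j)}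

variable {tw u F} {h : ℂ}

lemma L_mem_span_positivePart (hu : IsHW h M u) {m : ℤ} (hm : 0 ≤ m) {z : T.carrier}
    (hz : z ∈ tw.positivePart u F) : T.L m z ∈ span ℂ (tw.positivePart u F) := by
  obtain ⟨r, hr⟩ := hu.L_eq_smul hm
  rcases hz with ⟨j, hj, rfl⟩ | ⟨j, hj, rfl⟩
  · rw [tw.actL, hr, F.act_Lx, map_smul, LinearMap.smul_apply, map_smul]
    exact add_mem (smul_mem _ _ (subset_span (.inl ⟨j, hj, rfl⟩)))
      (smul_mem _ _ (subset_span (.inl ⟨m + j, by omega, rfl⟩)))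
  · rw [tw.actL, hr, F.act_Ly, map_smul, LinearMap.smul_apply, map_smul]
    exact add_mem (smul_mem _ _ (subset_span (.inr ⟨j, hj, rfl⟩)))
      (smul_mem _ _ (subset_span (.inr ⟨m + j, by omega, rfl⟩)))

lemma G_mem_span_positivePart (hu : IsHW h M u) {m : ℤ} (hm : 0 ≤ m) {z : T.carrier}
    (hz : z ∈ tw.positivePart u F) : T.G m z ∈ span ℂ (tw.positivePart u F) := by
  rcases hz with ⟨j, hj, rfl⟩ | ⟨j, hj, rfl⟩
  · rw [tw.actG_even m u hu.mem_even, hu.hwG m hm, map_zero, LinearMap.zero_apply, zero_add,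
      F.act_Gx]
    exact subset_span (.inr ⟨m + j, by omega, rfl⟩)
  · rw [tw.actG_even m u hu.mem_even, hu.hwG m hm, map_zero, LinearMap.zero_apply, zero_add,
      F.act_Gy, map_smul]
    exact smul_mem _ _ (subset_span (.inl ⟨m + j + 1, by omega, rfl⟩))

end PositivePart

end TensorWitness

theorem verma_tensor_reducible_general (a b c h : ℂ)
    (M : NSMod c) (u : M.carrier) (hM : IsVerma h M u)
    (S : NSMod 0) (F : SA'Family a b S)
    (T : NSMod c) (tw : TensorWitness M S T) :
    ∃ W : Submodule ℂ T.carrier, T.IsSubmodule W ∧ W ≠ ⊥ ∧ W ≠ ⊤ := by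
  obtain ⟨hu, hind, -⟩ := hM
  set w := Sum.elim F.x fun j : {j : ℤ // j ≠ -1} => F.y j
  have hfree := tw.linearIndependent_word_tmul (.inl hu.mem_even)
    (by simpa only [NSMod.vermaMonomial_eq_word] using hind) F.linearIndependent
  set W := T.negSpan (tw.positivePart u F)
  have hW : W ≤ span ℂ ((fun γ : VermaIndex × _ => T.word γ.1.word (tw.t u (w γ.2))) ''
      {γ | γ.2 ≠ .inl 0}) := by
    refine span_le.mpr ?_
    rintro _ ⟨N, z, hN, hz, rfl⟩
    obtain ⟨i, hi, rfl⟩ : ∃ i, i ≠ .inl 0 ∧ z = tw.t u (w i) := by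
      rcases hz with ⟨j, hj, rfl⟩ | ⟨j, hj, rfl⟩
      · exact ⟨.inl j, by simp; omega, rfl⟩
      · exact ⟨.inr ⟨j, by omega⟩, by simp, rfl⟩
    refine span_le.mpr ?_ (T.word_mem_normalSpan _ N hN)
    rintro _ ⟨P, -, rfl⟩
    exact subset_span ⟨(P, i), hi, rfl⟩
  refine ⟨W, T.isSubmodule_negSpan (fun m hm _ => TensorWitness.L_mem_span_positivePart hu hm)
    (fun m hm _ => TensorWitness.G_mem_span_positivePart hu hm), fun hbot => ?_, fun htop => ?_⟩
  · have hx : tw.t u (F.x 1) ∈ W := NSMod.subset_negSpan (.inl ⟨1, le_rfl, rfl⟩)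
    rw [hbot, mem_bot] at hx
    exact hfree.ne_zero (VermaIndex.nil, Sum.inl 1) hx
  · exact hfree.notMem_span_image (x := (VermaIndex.nil, .inl 0)) (by simp) (hW (htop ▸ mem_top))

/-- Theorem 2.3: the tensor product of the Verma module
`M(c,h)` with an intermediate series module `SA'_{a,b}` is reducible: it has
a submodule different from `0` and the whole module. -/
theorem verma_tensor_reducible (a b c h : ℂ)
    (ha0 : 0 ≤ a.re) (ha1 : a.re < 1) (hb : b ≠ 1)
    (M : NSMod c) (u : M.carrier) (hM : IsVerma h M u)
    (S : NSMod 0) (F : SA'Family a b S)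
    (T : NSMod c) (tw : TensorWitness M S T) :
    ∃ W : Submodule ℂ T.carrier, T.IsSubmodule W ∧ W ≠ ⊥ ∧ W ≠ ⊤ :=
  verma_tensor_reducible_general a b c h M u hM S F T tw
end
end

section
/- Let a, b ∈ ℂ and let V be a highest weight module over the Neveu–Schwarz algebra with highest weight vector u of highest weight (c, h), decomposed as V = ⨁_{n ∈ ℕ} V_{h−n/2} as in the grading assumption. Then the operators L_k (k ∈ ℤ) and G_{k+1/2} (k ∈ ℤ) of the shifted module V ⊗ ℂ[t^{±1/2}] satisfy the Neveu–Schwarz relations with central charge c; that is, the shifted module is a Neveu–Schwarz module of central charge c. -/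
noncomputable section

open Submodule

/-! The shifted module is `V` tensored, weight space by weight space, with a line on which
`L k` and `G k` act by the scalars `shiftCoeffL` and `shiftCoeffG`. These scalars depend only on
`s + d` and its parity, which `L k` and `G k` leave unchanged since they raise `s` by exactly as
much as they lower `d`; and they satisfy the Neveu–Schwarz relations with central charge `0`
(the sign `(-1)^{|v|}` in the action of `G` is what makes the anticommutator work). Expanding a
relation on `v ⊗ t^s` therefore leaves the relation in `V`, cross terms that cancel, and the
scalar relation. The relations then hold everywhere because `V` is spanned by weight vectors. -/

theorem Module.End.apply_mem_eigenspace_add {R M : Type*} [CommRing R] [AddCommGroup M]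
    [Module R M] {f X : Module.End R M} {μ ν : R} (hfX : ∀ v, f (X v) - X (f v) = ν • X v)
    {v : M} (hv : v ∈ f.eigenspace μ) : X v ∈ f.eigenspace (μ + ν) := by
  rw [Module.End.mem_eigenspace_iff] at hv ⊢
  rw [← sub_add_cancel (f (X v)) (X (f v)), hfX, hv, map_smul, add_smul, add_comm]

/-- The `L₀`-eigenspace `V_{h - q/2}`, i.e. `V_{h+d}` with `q = -2d`. -/
def NSMod.weightSpace {c : ℂ} (V : NSMod c) (h : ℂ) (q : ℤ) : Submodule ℂ V.carrier :=
  Module.End.eigenspace (V.L 0) (h - q / 2)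

namespace NSMod

variable {c h : ℂ} (V : NSMod c) {q : ℤ} {v : V.carrier}

theorem L_mem_weightSpace (hv : v ∈ V.weightSpace h q) (k : ℤ) :
    V.L k v ∈ V.weightSpace h (q - 2 * k) := by
  have := Module.End.apply_mem_eigenspace_add (ν := (k : ℂ))
    (fun w => by simpa using V.rel_LL 0 k w) hv
  unfold weightSpace
  convert this using 2
  push_cast; ring

theorem G_mem_weightSpace (hv : v ∈ V.weightSpace h q) (k : ℤ) :
    V.G k v ∈ V.weightSpace h (q - 2 * k - 1) := by
  have := Module.End.apply_mem_eigenspace_add (ν := (k : ℂ) + 1 / 2)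
    (fun w => by simpa using V.rel_LG 0 k w) hv
  unfold weightSpace
  convert this using 2
  push_cast; ring

end NSMod

namespace GradedHW

variable {c h : ℂ} {V : NSMod c} {u : V.carrier} {D : ℕ → Submodule ℂ V.carrier}

theorem le_weightSpace (hV : GradedHW h V u D) (n : ℕ) : D n ≤ V.weightSpace h n := by
  intro v hv
  simpa [NSMod.weightSpace, Module.End.mem_eigenspace_iff] using hV.eig n v hv

-- The `D n` exhaust `V` and lie in the independent eigenspaces of `L 0`, so they are the whole
-- eigenspaces.
theorem weightSpace_eq_extend (hV : GradedHW h V u D) :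
    V.weightSpace h = Function.extend ((↑) : ℕ → ℤ) D ⊥ := by
  symm
  refine ((Module.End.eigenspaces_iSupIndep (V.L 0)).comp ?_).le_iff_eq_of_iSup_eq_top ?_ |>.1 ?_
  · intro q r hqr
    exact_mod_cast (by linear_combination -2 * hqr : (q : ℂ) = r)
  · refine eq_top_iff.2 (hV.internal.submodule_iSup_eq_top ▸ iSup_le fun n => ?_)
    exact le_iSup_of_le (n : ℤ) (Nat.cast_injective.extend_apply D ⊥ n).ge
  · intro q
    by_cases hq : ∃ n : ℕ, (n : ℤ) = q
    · obtain ⟨n, rfl⟩ := hq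
      rw [Nat.cast_injective.extend_apply]
      exact hV.le_weightSpace n
    · simp [Function.extend_apply' _ _ _ hq]

theorem eq_zero_or_mem_of_mem_weightSpace (hV : GradedHW h V u D) {q : ℤ} {v : V.carrier}
    (hv : v ∈ V.weightSpace h q) : v = 0 ∨ ∃ n : ℕ, (n : ℤ) = q ∧ v ∈ D n := by
  rw [hV.weightSpace_eq_extend] at hv
  by_cases hq : ∃ n : ℕ, (n : ℤ) = q
  · obtain ⟨n, rfl⟩ := hq
    rw [Nat.cast_injective.extend_apply] at hv
    exact .inr ⟨n, rfl, hv⟩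
  · rw [Function.extend_apply' _ _ _ hq] at hv
    exact .inl ((Submodule.mem_bot ℂ).1 hv)

end GradedHW

section ShiftCoeff

variable (a b : ℂ)

/-- The scalar by which `L k` acts on the factor `t^{p/2}` of `v ⊗ t^{p/2}`, `v ∈ V_{h - q/2}`. -/
def shiftCoeffL (k p q : ℤ) : ℂ :=
  if Even (p - q) then a + p / 2 + k * b + q / 2 else a + p / 2 + k * (b - 1 / 2) + q / 2

/-- The scalar by which `G k` acts on the factor `t^{p/2}` of `v ⊗ t^{p/2}`, `v ∈ V_{h - q/2}`,
including the sign `(-1)^{|v|} = (-1)^q`. -/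
def shiftCoeffG (k p q : ℤ) : ℂ :=
  (if Even q then 1 else -1) *
    if Even (p - q) then 1 else a + p / 2 + (2 * k + 1) * (b - 1 / 2) + q / 2

variable {a b}

theorem shiftCoeffL_add_sub (k p q r : ℤ) :
    shiftCoeffL a b k (p + r) (q - r) = shiftCoeffL a b k p q := by
  simp only [shiftCoeffL, Int.even_iff]
  split_ifs <;> first | omega | (push_cast; ring)

theorem shiftCoeffG_add_two_mul_sub (k p q j : ℤ) :
    shiftCoeffG a b k (p + 2 * j) (q - 2 * j) = shiftCoeffG a b k p q := by
  simp only [shiftCoeffG, Int.even_iff]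
  split_ifs <;> first | omega | (push_cast; ring)

theorem shiftCoeffG_add_one_sub_one (k p q : ℤ) :
    shiftCoeffG a b k (p + 1) (q - 1) = -shiftCoeffG a b k p q := by
  simp only [shiftCoeffG, Int.even_iff]
  split_ifs <;> first | omega | (push_cast; ring)

theorem shiftCoeffL_comm (m n p q : ℤ) :
    shiftCoeffL a b n p q * shiftCoeffL a b m (p + 2 * n) q
      - shiftCoeffL a b m p q * shiftCoeffL a b n (p + 2 * m) q
      = (n - m) * shiftCoeffL a b (m + n) p q := by
  simp only [shiftCoeffL, Int.even_iff]
  split_ifs <;> first | omega | (push_cast; ring)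

theorem shiftCoeffL_shiftCoeffG_comm (m k p q : ℤ) :
    shiftCoeffG a b k p q * shiftCoeffL a b m (p + 2 * k + 1) q
      - shiftCoeffL a b m p q * shiftCoeffG a b k (p + 2 * m) q
      = (k + 1 / 2 - m / 2) * shiftCoeffG a b (m + k) p q := by
  simp only [shiftCoeffL, shiftCoeffG, Int.even_iff]
  split_ifs <;> first | omega | (push_cast; ring)

theorem shiftCoeffG_anticomm (k l p q : ℤ) :
    shiftCoeffG a b l p q * shiftCoeffG a b k (p + 2 * l + 1) q
      + shiftCoeffG a b k p q * shiftCoeffG a b l (p + 2 * k + 1) q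
      = 2 * shiftCoeffL a b (k + l + 1) p q := by
  simp only [shiftCoeffL, shiftCoeffG, Int.even_iff]
  split_ifs <;> first | omega | (push_cast; ring)

end ShiftCoeff

theorem ite_smul_apply_add_two_mul {M : Type*} [AddCommGroup M] [Module ℂ M] (f : ℤ → M)
    (p j : ℤ) (x : ℂ) :
    (if j = 0 then x else 0) • f (p + 2 * j) = (if j = 0 then x else 0) • f p := by
  split_ifs with hj <;> simp [hj]

namespace ShiftedWitness

variable {a b c h : ℂ} {V : NSMod c} {u : V.carrier} {D : ℕ → Submodule ℂ V.carrier}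
  {Sh : PreNSMod} (sw : ShiftedWitness a b V D Sh)

theorem linearMap_ext (hD : ⨆ n, D n = ⊤) {T T' : Sh.carrier →ₗ[ℂ] Sh.carrier}
    (H : ∀ p n, ∀ v ∈ D n, T (sw.ι p v) = T' (sw.ι p v)) : T = T' := by
  have hspan : span ℂ (⋃ n, (D n : Set V.carrier)) = ⊤ := by rw [← iSup_eq_span, hD]
  rw [← LinearMap.cancel_right sw.directSum.surjective]
  refine Finsupp.lhom_ext' fun p => LinearMap.ext_on hspan fun v hv => ?_
  obtain ⟨n, hn⟩ := Set.mem_iUnion.1 hv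
  simpa using H p n v hn

theorem L_ι (hV : GradedHW h V u D) (k p : ℤ) {q : ℤ} {v : V.carrier}
    (hv : v ∈ V.weightSpace h q) :
    Sh.L k (sw.ι p v)
      = sw.ι (p + 2 * k) (V.L k v) + shiftCoeffL a b k p q • sw.ι (p + 2 * k) v := by
  obtain rfl | ⟨n, rfl, hn⟩ := hV.eq_zero_or_mem_of_mem_weightSpace hv
  · simp
  · simpa [shiftCoeffL, ← even_iff_two_dvd] using sw.actL k p n v hn

theorem G_ι (hV : GradedHW h V u D) (k p : ℤ) {q : ℤ} {v : V.carrier}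
    (hv : v ∈ V.weightSpace h q) :
    Sh.G k (sw.ι p v)
      = sw.ι (p + 2 * k + 1) (V.G k v) + shiftCoeffG a b k p q • sw.ι (p + 2 * k + 1) v := by
  obtain rfl | ⟨n, rfl, hn⟩ := hV.eq_zero_or_mem_of_mem_weightSpace hv
  · simp
  · simpa [shiftCoeffG, ← even_iff_two_dvd, neg_one_pow_eq_ite] using sw.actG k p n v hn

theorem L_comm_L_ι (hV : GradedHW h V u D) (m n p : ℤ) {q : ℤ} {v : V.carrier}
    (hv : v ∈ V.weightSpace h q) :
    Sh.L m (Sh.L n (sw.ι p v)) - Sh.L n (Sh.L m (sw.ι p v))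
      = ((n : ℂ) - (m : ℂ)) • Sh.L (m + n) (sw.ι p v)
        + (if m + n = 0 then (((m : ℂ) ^ 3 - (m : ℂ)) / 12) * c else 0) • sw.ι p v := by
  rw [sw.L_ι hV n p hv, sw.L_ι hV m p hv, sw.L_ι hV (m + n) p hv]
  simp only [map_add, map_smul]
  rw [sw.L_ι hV m _ (V.L_mem_weightSpace hv n), sw.L_ι hV m _ hv,
    sw.L_ι hV n _ (V.L_mem_weightSpace hv m), sw.L_ι hV n _ hv, shiftCoeffL_add_sub,
    shiftCoeffL_add_sub, show p + 2 * n + 2 * m = p + 2 * (m + n) by ring,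
    show p + 2 * m + 2 * n = p + 2 * (m + n) by ring]
  have hrel := congrArg (sw.ι (p + 2 * (m + n))) (V.rel_LL m n v)
  simp only [map_add, map_sub, map_smul] at hrel
  linear_combination (norm := module) hrel + ite_smul_apply_add_two_mul (sw.ι · v) p (m + n) _
    + shiftCoeffL_comm (a := a) (b := b) m n p q • sw.ι (p + 2 * (m + n)) v

theorem L_comm_G_ι (hV : GradedHW h V u D) (m k p : ℤ) {q : ℤ} {v : V.carrier}
    (hv : v ∈ V.weightSpace h q) :
    Sh.L m (Sh.G k (sw.ι p v)) - Sh.G k (Sh.L m (sw.ι p v))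
      = (((k : ℂ) + 1 / 2) - (m : ℂ) / 2) • Sh.G (m + k) (sw.ι p v) := by
  rw [sw.G_ι hV k p hv, sw.L_ι hV m p hv, sw.G_ι hV (m + k) p hv]
  simp only [map_add, map_smul]
  rw [sw.L_ι hV m _ (V.G_mem_weightSpace hv k), sw.L_ι hV m _ hv,
    sw.G_ι hV k _ (V.L_mem_weightSpace hv m), sw.G_ι hV k _ hv, shiftCoeffL_add_sub,
    shiftCoeffL_add_sub, shiftCoeffG_add_two_mul_sub,
    show p + 2 * k + 1 + 2 * m = p + 2 * (m + k) + 1 by ring,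
    show p + 2 * m + 2 * k + 1 = p + 2 * (m + k) + 1 by ring]
  have hrel := congrArg (sw.ι (p + 2 * (m + k) + 1)) (V.rel_LG m k v)
  simp only [map_sub, map_smul] at hrel
  linear_combination (norm := module) hrel
    + shiftCoeffL_shiftCoeffG_comm (a := a) (b := b) m k p q • sw.ι (p + 2 * (m + k) + 1) v

theorem G_anticomm_G_ι (hV : GradedHW h V u D) (k l p : ℤ) {q : ℤ} {v : V.carrier}
    (hv : v ∈ V.weightSpace h q) :
    Sh.G k (Sh.G l (sw.ι p v)) + Sh.G l (Sh.G k (sw.ι p v))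
      = (2 : ℂ) • Sh.L (k + l + 1) (sw.ι p v)
        - (if k + l + 1 = 0 then (1 / 3) * (((k : ℂ) + 1 / 2) ^ 2 - 1 / 4) * c else 0) •
          sw.ι p v := by
  rw [sw.G_ι hV l p hv, sw.G_ι hV k p hv, sw.L_ι hV (k + l + 1) p hv]
  simp only [map_add, map_smul]
  rw [sw.G_ι hV k _ (V.G_mem_weightSpace hv l), sw.G_ι hV k _ hv,
    sw.G_ι hV l _ (V.G_mem_weightSpace hv k), sw.G_ι hV l _ hv, shiftCoeffG_add_one_sub_one,
    shiftCoeffG_add_one_sub_one, shiftCoeffG_add_two_mul_sub, shiftCoeffG_add_two_mul_sub,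
    show p + 2 * l + 1 + 2 * k + 1 = p + 2 * (k + l + 1) by ring,
    show p + 2 * k + 1 + 2 * l + 1 = p + 2 * (k + l + 1) by ring]
  have hrel := congrArg (sw.ι (p + 2 * (k + l + 1))) (V.rel_GG k l v)
  simp only [map_add, map_sub, map_smul] at hrel
  linear_combination (norm := module) hrel - ite_smul_apply_add_two_mul (sw.ι · v) p (k + l + 1) _
    + shiftCoeffG_anticomm (a := a) (b := b) k l p q • sw.ι (p + 2 * (k + l + 1)) v

end ShiftedWitness

/-- Lemma 3.1: the operators of the shifted module
`V ⊗ ℂ[t^{±1/2}]` attached to a graded highest weight module `V` of highest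
weight `(c,h)` satisfy the Neveu–Schwarz relations with central charge `c`:
the shifted module is a Neveu–Schwarz module of central charge `c`. -/
theorem shifted_module_is_NSMod (a b c h : ℂ)
    (V : NSMod c) (u : V.carrier) (D : ℕ → Submodule ℂ V.carrier)
    (hV : GradedHW h V u D)
    (Sh : PreNSMod) (sw : ShiftedWitness a b V D Sh) :
    (∀ (m n : ℤ) (v : Sh.carrier),
      Sh.L m (Sh.L n v) - Sh.L n (Sh.L m v)
        = ((n : ℂ) - (m : ℂ)) • Sh.L (m + n) v
          + (if m + n = 0 then (((m : ℂ) ^ 3 - (m : ℂ)) / 12) * c else 0) • v) ∧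
    (∀ (m k : ℤ) (v : Sh.carrier),
      Sh.L m (Sh.G k v) - Sh.G k (Sh.L m v)
        = (((k : ℂ) + 1 / 2) - (m : ℂ) / 2) • Sh.G (m + k) v) ∧
    (∀ (k l : ℤ) (v : Sh.carrier),
      Sh.G k (Sh.G l v) + Sh.G l (Sh.G k v)
        = (2 : ℂ) • Sh.L (k + l + 1) v
          - (if k + l + 1 = 0
              then (1 / 3) * (((k : ℂ) + 1 / 2) ^ 2 - 1 / 4) * c
              else 0) • v) := by
  have hD := hV.internal.submodule_iSup_eq_top
  refine ⟨fun m n v => ?_, fun m k v => ?_, fun k l v => ?_⟩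
  · exact LinearMap.congr_fun (sw.linearMap_ext hD (T := Sh.L m ∘ₗ Sh.L n - Sh.L n ∘ₗ Sh.L m)
      (T' := ((n : ℂ) - m) • Sh.L (m + n)
        + (if m + n = 0 then (((m : ℂ) ^ 3 - m) / 12) * c else 0) • LinearMap.id)
      fun p j w hw => sw.L_comm_L_ι hV m n p (hV.le_weightSpace j hw)) v
  · exact LinearMap.congr_fun (sw.linearMap_ext hD (T := Sh.L m ∘ₗ Sh.G k - Sh.G k ∘ₗ Sh.L m)
      (T' := ((k : ℂ) + 1 / 2 - m / 2) • Sh.G (m + k))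
      fun p j w hw => sw.L_comm_G_ι hV m k p (hV.le_weightSpace j hw)) v
  · exact LinearMap.congr_fun (sw.linearMap_ext hD (T := Sh.G k ∘ₗ Sh.G l + Sh.G l ∘ₗ Sh.G k)
      (T' := (2 : ℂ) • Sh.L (k + l + 1)
        - (if k + l + 1 = 0 then (1 / 3) * (((k : ℂ) + 1 / 2) ^ 2 - 1 / 4) * c else 0) •
          LinearMap.id)
      fun p j w hw => sw.G_anticomm_G_ι hV k l p (hV.le_weightSpace j hw)) v
end
end

section
/- Let a, b ∈ ℂ and let V be a highest weight module over the Neveu–Schwarz algebra with highest weight vector u of highest weight (c, h), decomposed as V = ⨁_{n ∈ ℕ} V_{h−n/2} as in the grading assumption. Then the linear map f : V ⊗ SA_{a,b} → V ⊗ ℂ[t^{±1/2}] determined by f(v ⊗ x_m) = v ⊗ t^{m+d} and f(v ⊗ y_{m+1/2}) = v ⊗ t^{m+1/2+d}, for v ∈ V_{h+d} and m ∈ ℤ, is an isomorphism of Neveu–Schwarz modules, where V ⊗ SA_{a,b} carries the tensor product module structure and V ⊗ ℂ[t^{±1/2}] carries the shifted module structure. -/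
/-!
Decompose `V = ⨁ V_{h+d}` and index the basis of `SA_{a,b}` by degree, `z_j` having degree
`j/2`. On `V_{h+d} ⊗ SA_{a,b}` the map is `v ⊗ z_j ↦ v ⊗ t^{j/2 + d}`, a bijection of bases with
inverse `v ⊗ t^s ↦ v ⊗ z_{2(s - d)}`; this gives bijectivity. Since both modules are spanned by
such vectors with `v` homogeneous, the intertwining relations need only be checked on `v ⊗ z_j`.
There `L_k` and `G_{k+1/2}` raise the `L_0`-weight of `v` by `k` and `k + 1/2`, so `L_k v` and
`G_{k+1/2} v` are again homogeneous (or zero), and the coefficients of the action on `SA_{a,b}`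
are precisely those defining the shifted module, the sign `(-1)^{|v|}` of the tensor product
matching the one in the shifted `G`-action.
-/

noncomputable section

open Submodule

theorem Module.End.eigenspace_le_iSup_of_le {K M ι : Type*} [Field K] [AddCommGroup M]
    [Module K M] {A : Module.End K M} {D : ι → Submodule K M} {μ : ι → K}
    (hD : ⨆ i, D i = ⊤) (hle : ∀ i, D i ≤ A.eigenspace (μ i)) (ν : K) :
    A.eigenspace ν ≤ ⨆ (i) (_ : μ i = ν), D i := by
  intro w hw
  have hw_top : w ∈ (⨆ (i) (_ : μ i = ν), D i) ⊔ ⨆ (i) (_ : μ i ≠ ν), D i := by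
    rw [← iSup_split, hD]
    trivial
  obtain ⟨d, hd, e, he, rfl⟩ := Submodule.mem_sup.mp hw_top
  have hd_eig : d ∈ A.eigenspace ν :=
    (iSup₂_le fun i (hi : μ i = ν) => hi ▸ hle i : ⨆ (i) (_ : μ i = ν), D i ≤ _) hd
  have he_eig : e ∈ A.eigenspace ν := by
    simpa using (A.eigenspace ν).sub_mem hw hd_eig
  -- `e` is both a `ν`-eigenvector and a sum of eigenvectors for other eigenvalues.
  have he_other : e ∈ ⨆ (ν') (_ : ν' ≠ ν), A.eigenspace ν' :=
    (iSup₂_le fun i hi => (hle i).trans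
      (le_iSup₂ (f := fun ν' (_ : ν' ≠ ν) => A.eigenspace ν') (μ i) hi) :
      ⨆ (i) (_ : μ i ≠ ν), D i ≤ _) he
  rw [Submodule.disjoint_def.mp (A.eigenspaces_iSupIndep ν) e he_eig he_other, add_zero]
  exact hd

theorem LinearMap.ext_of_iSup_eq_top {R M N ι : Type*} [Semiring R] [AddCommMonoid M]
    [Module R M] [AddCommMonoid N] [Module R N] {D : ι → Submodule R M} (hD : ⨆ i, D i = ⊤)
    {f g : M →ₗ[R] N} (H : ∀ i, ∀ v ∈ D i, f v = g v) : f = g :=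
  LinearMap.ext_on (s := ⋃ i, (D i : Set M)) (by rw [← Submodule.iSup_eq_span, hD])
    fun v hv => by
      obtain ⟨i, hi⟩ := Set.mem_iUnion.mp hv
      exact H i v hi

theorem IsTensorProduct.ext_of_iSup_eq_top {R M₁ M₂ M N ι κ : Type*} [CommSemiring R]
    [AddCommMonoid M₁] [Module R M₁] [AddCommMonoid M₂] [Module R M₂] [AddCommMonoid M]
    [Module R M] [AddCommMonoid N] [Module R N] {t : M₁ →ₗ[R] M₂ →ₗ[R] M}
    (ht : IsTensorProduct t) {D : ι → Submodule R M₁} (hD : ⨆ i, D i = ⊤) {z : κ → M₂}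
    (hz : Submodule.span R (Set.range z) = ⊤) {f g : M →ₗ[R] N}
    (H : ∀ i, ∀ v ∈ D i, ∀ j, f (t v (z j)) = g (t v (z j))) : f = g := by
  have hft : t.compr₂ f = t.compr₂ g :=
    LinearMap.ext_of_iSup_eq_top hD fun i v hv =>
      LinearMap.ext_on_range hz fun j => H i v hv j
  ext w
  refine ht.inductionOn w (by simp only [map_zero]) (fun v s => LinearMap.congr_fun₂ hft v s) ?_
  intro w₁ w₂ h₁ h₂
  rw [map_add, map_add, h₁, h₂]

namespace DirectSum.IsInternal

variable {R M N ι : Type*} [Semiring R] [AddCommMonoid M] [Module R M] [AddCommMonoid N]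
  [Module R N] [DecidableEq ι] {D : ι → Submodule R M}

def glue (hD : IsInternal D) (φ : ι → M →ₗ[R] N) : M →ₗ[R] N :=
  toModule R ι N (fun i => φ i ∘ₗ (D i).subtype) ∘ₗ
    (LinearEquiv.ofBijective (coeLinearMap D) hD).symm.toLinearMap

theorem glue_apply_of_mem (hD : IsInternal D) (φ : ι → M →ₗ[R] N) {i : ι} {v : M}
    (hv : v ∈ D i) : hD.glue φ v = φ i v := by
  have hsymm : (LinearEquiv.ofBijective (coeLinearMap D) hD).symm v = lof R ι _ i ⟨v, hv⟩ :=
    (LinearEquiv.symm_apply_eq _).mpr (coeLinearMap_of D i ⟨v, hv⟩).symm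
  simp only [glue, LinearMap.comp_apply, LinearEquiv.coe_toLinearMap, hsymm, toModule_lof]
  rfl

end DirectSum.IsInternal

namespace NSMod

variable {c : ℂ} (V : NSMod c) {w : V.carrier} {ν : ℂ}

theorem L_zero_L_of_eq_smul (hw : V.L 0 w = ν • w) (k : ℤ) :
    V.L 0 (V.L k w) = (ν + k) • V.L k w := by
  have hrel := V.rel_LL 0 k w
  simp only [zero_add, Int.cast_zero, sub_zero, hw, map_smul] at hrel
  rw [eq_add_of_sub_eq hrel, ite_eq_right_iff.mpr fun _ => by simp]
  module

theorem L_zero_G_of_eq_smul (hw : V.L 0 w = ν • w) (k : ℤ) :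
    V.L 0 (V.G k w) = (ν + k + 1 / 2) • V.G k w := by
  have hrel := V.rel_LG 0 k w
  simp only [zero_add, Int.cast_zero, zero_div, sub_zero, hw, map_smul] at hrel
  rw [eq_add_of_sub_eq hrel]
  module

end NSMod

namespace GradedHW

variable {c h : ℂ} {V : NSMod c} {u : V.carrier} {D : ℕ → Submodule ℂ V.carrier}

theorem mem_iSup_of_L_zero_eq (hV : GradedHW h V u D) {w : V.carrier} {q : ℤ}
    (hw : V.L 0 w = (h - q / 2) • w) : w ∈ ⨆ (n : ℕ) (_ : (n : ℤ) = q), D n := by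
  have hmem := Module.End.eigenspace_le_iSup_of_le (μ := fun n : ℕ => h - n / 2)
    hV.internal.submodule_iSup_eq_top
    (fun n v hv => Module.End.mem_eigenspace_iff.mpr (hV.eig n v hv)) (h - q / 2)
    (Module.End.mem_eigenspace_iff.mpr hw)
  have hcond : ∀ n : ℕ, (h - (n : ℂ) / 2 = h - q / 2) ↔ (n : ℤ) = q := fun n => by
    rw [sub_right_inj, div_left_inj' two_ne_zero, ← Int.cast_natCast, Int.cast_inj]
  simpa only [hcond] using hmem

theorem G_tmul_of_mem (hV : GradedHW h V u D) {S : NSMod 0} {T : NSMod c}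
    (tw : TensorWitness V S T) {n : ℕ} {v : V.carrier} (hv : v ∈ D n) (k : ℤ)
    (s : S.carrier) :
    T.G k (tw.t v s) = tw.t (V.G k v) s + (-1 : ℂ) ^ n • tw.t v (S.G k s) := by
  rcases n.even_or_odd with hn | hn
  · rw [tw.actG_even k v (hV.even_part n hn hv), hn.neg_one_pow, one_smul]
  · rw [tw.actG_odd k v (hV.odd_part n hn hv), hn.neg_one_pow, neg_one_smul, sub_eq_add_neg]

end GradedHW

namespace SAFamily

variable {a b : ℂ} {S : NSMod 0} (F : SAFamily a b S)

/-- The basis vector of degree `j / 2`: `x_{j/2}` for even `j` and `y_{j/2}` for odd `j`. -/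
def z (j : ℤ) : S.carrier := if Even j then F.x (j / 2) else F.y (j / 2)

theorem z_two_mul (m : ℤ) : F.z (2 * m) = F.x m := by
  simp [z]

theorem z_two_mul_add_one (m : ℤ) : F.z (2 * m + 1) = F.y m := by
  simp only [z, Int.not_even_two_mul_add_one, if_false]
  congr 1
  omega

theorem linearIndependent_z : LinearIndependent ℂ F.z := by
  have hz : F.z =
      Sum.elim F.x F.y ∘ fun j => if Even j then Sum.inl (j / 2) else Sum.inr (j / 2) := by
    ext j
    by_cases hj : Even j <;> simp [z, hj]
  rw [hz]
  refine F.indep.comp _ fun j j' hjj' => ?_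
  simp only [Int.even_iff] at hjj'
  split_ifs at hjj' <;> simp only [Sum.inl.injEq, Sum.inr.injEq] at hjj' <;> omega

theorem range_z : Set.range F.z = Set.range F.x ∪ Set.range F.y := by
  ext w
  constructor
  · rintro ⟨j, rfl⟩
    unfold z
    split_ifs
    exacts [Or.inl ⟨_, rfl⟩, Or.inr ⟨_, rfl⟩]
  · rintro (⟨m, rfl⟩ | ⟨m, rfl⟩)
    exacts [⟨_, F.z_two_mul m⟩, ⟨_, F.z_two_mul_add_one m⟩]

theorem span_range_z : Submodule.span ℂ (Set.range F.z) = ⊤ := by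
  rw [range_z, F.spans]

def basis : Module.Basis ℤ ℂ S.carrier :=
  Module.Basis.mk F.linearIndependent_z F.span_range_z.ge

theorem coe_basis : ⇑F.basis = F.z :=
  Module.Basis.coe_mk _ _

theorem L_z (i j : ℤ) :
    S.L i (F.z j) = (a + j / 2 + i * (if Even j then b else b - 1 / 2)) • F.z (j + 2 * i) := by
  obtain ⟨m, rfl | rfl⟩ := Int.even_or_odd' j
  · rw [F.z_two_mul, F.act_Lx, if_pos (even_two_mul m), show 2 * m + 2 * i = 2 * (i + m) by ring,
      F.z_two_mul]
    push_cast
    ring_nf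
  · rw [F.z_two_mul_add_one, F.act_Ly, if_neg (Int.not_even_two_mul_add_one m),
      show 2 * m + 1 + 2 * i = 2 * (i + m) + 1 by ring, F.z_two_mul_add_one]
    push_cast
    ring_nf

theorem G_z (i j : ℤ) :
    S.G i (F.z j) =
      (if Even j then 1 else a + j / 2 + (2 * i + 1) * (b - 1 / 2)) • F.z (j + 2 * i + 1) := by
  obtain ⟨m, rfl | rfl⟩ := Int.even_or_odd' j
  · rw [F.z_two_mul, F.act_Gx, if_pos (even_two_mul m), one_smul,
      show 2 * m + 2 * i + 1 = 2 * (i + m) + 1 by ring, F.z_two_mul_add_one]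
  · rw [F.z_two_mul_add_one, F.act_Gy, if_neg (Int.not_even_two_mul_add_one m),
      show 2 * m + 1 + 2 * i + 1 = 2 * (i + m + 1) by ring, F.z_two_mul]
    push_cast
    ring_nf

end SAFamily

theorem ShiftedWitness.ext {a b c : ℂ} {V : NSMod c} {D : ℕ → Submodule ℂ V.carrier}
    {Sh : PreNSMod} (sw : ShiftedWitness a b V D Sh) (hD : ⨆ n, D n = ⊤) {N : Type*}
    [AddCommGroup N] [Module ℂ N] {f g : Sh.carrier →ₗ[ℂ] N}
    (H : ∀ (p : ℤ) (n : ℕ), ∀ v ∈ D n, f (sw.ι p v) = g (sw.ι p v)) : f = g := by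
  suffices hlsum : f ∘ₗ Finsupp.lsum ℂ sw.ι = g ∘ₗ Finsupp.lsum ℂ sw.ι by
    ext w
    obtain ⟨l, rfl⟩ := sw.directSum.surjective w
    exact LinearMap.congr_fun hlsum l
  refine Finsupp.lhom_ext' fun p => LinearMap.ext_of_iSup_eq_top hD fun n v hv => ?_
  simpa using H p n v hv

section ShiftMap

variable {a b c : ℂ} {V : NSMod c} {D : ℕ → Submodule ℂ V.carrier} {S : NSMod 0} {T : NSMod c}
  {Sh : PreNSMod} (hD : DirectSum.IsInternal D) (F : SAFamily a b S) (tw : TensorWitness V S T)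
  (sw : ShiftedWitness a b V D Sh)

def shiftMap : T.carrier →ₗ[ℂ] Sh.carrier :=
  tw.isTensor.lift (F.basis.constr ℂ fun j => hD.glue fun n => sw.ι (j - n)).flip

def shiftInv : Sh.carrier →ₗ[ℂ] T.carrier :=
  Finsupp.lsum ℂ (fun p => hD.glue fun n => tw.t.flip (F.z (p + n))) ∘ₗ
    (LinearEquiv.ofBijective _ sw.directSum).symm.toLinearMap

variable {hD F tw sw}

theorem shiftMap_tmul {n : ℕ} {v : V.carrier} (hv : v ∈ D n) (j : ℤ) :
    shiftMap hD F tw sw (tw.t v (F.z j)) = sw.ι (j - n) v := by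
  rw [shiftMap, IsTensorProduct.lift_eq, LinearMap.flip_apply, ← F.coe_basis,
    Module.Basis.constr_basis, hD.glue_apply_of_mem _ hv]

theorem shiftInv_ι {n : ℕ} {v : V.carrier} (hv : v ∈ D n) (p : ℤ) :
    shiftInv hD F tw sw (sw.ι p v) = tw.t v (F.z (p + n)) := by
  have hsymm : (LinearEquiv.ofBijective _ sw.directSum).symm (sw.ι p v) = Finsupp.single p v :=
    (LinearEquiv.symm_apply_eq _).mpr (Finsupp.lsum_single ℂ sw.ι p v).symm
  simp only [shiftInv, LinearMap.comp_apply, LinearEquiv.coe_toLinearMap, hsymm,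
    Finsupp.lsum_single, hD.glue_apply_of_mem _ hv, LinearMap.flip_apply]

theorem shiftInv_comp_shiftMap : shiftInv hD F tw sw ∘ₗ shiftMap hD F tw sw = LinearMap.id :=
  tw.isTensor.ext_of_iSup_eq_top hD.submodule_iSup_eq_top F.span_range_z fun n v hv j => by
    rw [LinearMap.comp_apply, shiftMap_tmul hv, shiftInv_ι hv, sub_add_cancel, LinearMap.id_apply]

theorem shiftMap_comp_shiftInv : shiftMap hD F tw sw ∘ₗ shiftInv hD F tw sw = LinearMap.id :=
  sw.ext hD.submodule_iSup_eq_top fun p n v hv => by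
    rw [LinearMap.comp_apply, shiftInv_ι hv, shiftMap_tmul hv, add_sub_cancel_right,
      LinearMap.id_apply]

end ShiftMap

theorem two_dvd_sub_sub_iff_even (j n : ℤ) : 2 ∣ j - n - n ↔ Even j := by
  rw [even_iff_two_dvd, show j - n - n = j - 2 * n by ring, dvd_sub_left (dvd_mul_right 2 n)]

section Homomorphism

variable {a b c h : ℂ} {V : NSMod c} {u : V.carrier} {D : ℕ → Submodule ℂ V.carrier}
  {S : NSMod 0} {T : NSMod c} {Sh : PreNSMod} (hV : GradedHW h V u D) (F : SAFamily a b S)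
  (tw : TensorWitness V S T) (sw : ShiftedWitness a b V D Sh)

theorem shiftMap_tmul_of_L_zero_eq {w : V.carrier} {q : ℤ} (hw : V.L 0 w = (h - q / 2) • w)
    (j : ℤ) : shiftMap hV.internal F tw sw (tw.t w (F.z j)) = sw.ι (j - q) w := by
  have hle : ⨆ (n : ℕ) (_ : (n : ℤ) = q), D n ≤
      LinearMap.eqLocus (shiftMap hV.internal F tw sw ∘ₗ tw.t.flip (F.z j)) (sw.ι (j - q)) := by
    refine iSup₂_le fun n hn v hv => ?_
    rw [LinearMap.mem_eqLocus, LinearMap.comp_apply, LinearMap.flip_apply, ← hn]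
    exact shiftMap_tmul hv j
  have hmem := hle (hV.mem_iSup_of_L_zero_eq hw)
  rwa [LinearMap.mem_eqLocus, LinearMap.comp_apply, LinearMap.flip_apply] at hmem

theorem shiftMap_comp_L (k : ℤ) :
    shiftMap hV.internal F tw sw ∘ₗ T.L k = Sh.L k ∘ₗ shiftMap hV.internal F tw sw := by
  refine tw.isTensor.ext_of_iSup_eq_top hV.internal.submodule_iSup_eq_top F.span_range_z
    fun n v hv j => ?_
  have hLv : V.L 0 (V.L k v) = (h - ((n - 2 * k : ℤ) : ℂ) / 2) • V.L k v := by
    rw [V.L_zero_L_of_eq_smul (hV.eig n v hv) k]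
    push_cast
    ring_nf
  simp only [LinearMap.comp_apply, tw.actL, map_add, F.L_z, map_smul,
    shiftMap_tmul_of_L_zero_eq hV F tw sw hLv, shiftMap_tmul hv, sw.actL k _ n v hv,
    two_dvd_sub_sub_iff_even]
  rw [show j - ((n : ℤ) - 2 * k) = j - n + 2 * k by ring, show j + 2 * k - n = j - n + 2 * k by ring]
  congr 2
  split_ifs <;> push_cast <;> ring

theorem shiftMap_comp_G (k : ℤ) :
    shiftMap hV.internal F tw sw ∘ₗ T.G k = Sh.G k ∘ₗ shiftMap hV.internal F tw sw := by
  refine tw.isTensor.ext_of_iSup_eq_top hV.internal.submodule_iSup_eq_top F.span_range_z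
    fun n v hv j => ?_
  have hGv : V.L 0 (V.G k v) = (h - ((n - 2 * k - 1 : ℤ) : ℂ) / 2) • V.G k v := by
    rw [V.L_zero_G_of_eq_smul (hV.eig n v hv) k]
    push_cast
    ring_nf
  simp only [LinearMap.comp_apply, hV.G_tmul_of_mem tw hv, map_add, F.G_z, map_smul,
    shiftMap_tmul_of_L_zero_eq hV F tw sw hGv, shiftMap_tmul hv, sw.actG k _ n v hv,
    two_dvd_sub_sub_iff_even, smul_smul]
  rw [show j - ((n : ℤ) - 2 * k - 1) = j - n + 2 * k + 1 by ring,
    show j + 2 * k + 1 - n = j - n + 2 * k + 1 by ring]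
  congr 2
  split_ifs <;> push_cast <;> ring

end Homomorphism

/-- Lemma 3.2: the map `f` with `f(v ⊗ x_m) = v ⊗ t^{m+d}`
and `f(v ⊗ y_{m+1/2}) = v ⊗ t^{m+1/2+d}` for `v ∈ V_{h+d}` (with `d = -n/2`,
so the exponents `m + d` and `m + 1/2 + d` are recorded by the integers
`2m - n` and `2m + 1 - n`) is an isomorphism of Neveu–Schwarz modules from
the tensor product `V ⊗ SA_{a,b}` onto the shifted module `V ⊗ ℂ[t^{±1/2}]`. -/
theorem tensor_iso_shifted (a b c h : ℂ)
    (V : NSMod c) (u : V.carrier) (D : ℕ → Submodule ℂ V.carrier)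
    (hV : GradedHW h V u D)
    (S : NSMod 0) (F : SAFamily a b S)
    (T : NSMod c) (tw : TensorWitness V S T)
    (Sh : NSMod c) (sw : ShiftedWitness a b V D Sh.toPreNSMod) :
    ∃ f : T.carrier →ₗ[ℂ] Sh.carrier,
      (∀ (n : ℕ), ∀ v ∈ D n, ∀ m : ℤ,
        f (tw.t v (F.x m)) = sw.ι (2 * m - (n : ℤ)) v ∧
        f (tw.t v (F.y m)) = sw.ι (2 * m + 1 - (n : ℤ)) v) ∧
      Function.Bijective f ∧
      (∀ (k : ℤ) (w : T.carrier), f (T.L k w) = Sh.L k (f w)) ∧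
      (∀ (k : ℤ) (w : T.carrier), f (T.G k w) = Sh.G k (f w)) := by
  refine ⟨shiftMap hV.internal F tw sw, fun n v hv m => ⟨?_, ?_⟩, ?_,
    fun k => LinearMap.congr_fun (shiftMap_comp_L hV F tw sw k),
    fun k => LinearMap.congr_fun (shiftMap_comp_G hV F tw sw k)⟩
  · rw [← F.z_two_mul, shiftMap_tmul hv]
  · rw [← F.z_two_mul_add_one, shiftMap_tmul hv]
  · exact Function.bijective_iff_has_inverse.mpr ⟨shiftInv hV.internal F tw sw,
      LinearMap.congr_fun shiftInv_comp_shiftMap, LinearMap.congr_fun shiftMap_comp_shiftInv⟩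
end
end
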